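/- arXiv:2105.12450 — 5 statements merged into one kernel-verified Lean document; each statement's English description precedes it below -/
import Mathlib

section
/- Let d = 2 and let x₁, …, x_N be finitely many points in ℝ². For every R > max_{1≤i≤N} |x_i| there exist a nonnegative measurable function h_R : ℝ² → [0, ∞) and positive constants c₁, …, c_N such that (i) ∫_{ℝ²} |∇φ|² ≥ ∫_{ℝ²} h_R(x) φ(x)² dx for every real-valued smooth function φ compactly supported in the open disc D(0,R) = {x ∈ ℝ² : |x| < R}, and (ii) for each i, h_R(x) · |x − x_i|² · (ln|x − x_i|)² → c_i as x → x_i. -/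
open MeasureTheory Set Filter
open scoped Real Topology ENNReal

noncomputable section

def Tequiv : (ℝ × ℝ) ≃ᵐ EuclideanSpace ℝ (Fin 2) :=
  (MeasurableEquiv.finTwoArrow).symm.trans ((MeasurableEquiv.toLp 2 (Fin 2 → ℝ)).symm).symm

lemma Tequiv_measurePreserving : MeasurePreserving Tequiv volume volume :=
  ((EuclideanSpace.volume_preserving_symm_measurableEquiv_toLp (Fin 2)).symm).comp
    ((volume_preserving_finTwoArrow ℝ).symm)

example : (volume : Measure (EuclideanSpace ℝ (Fin 2))).IsAddHaarMeasure := by infer_instance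

lemma Tequiv_apply (q : ℝ × ℝ) :
    Tequiv q = (WithLp.equiv 2 (Fin 2 → ℝ)).symm ![q.1, q.2] := by
  rfl

lemma Tequiv_norm (q : ℝ × ℝ) : ‖Tequiv q‖ = Real.sqrt (q.1^2 + q.2^2) := by
  rw [Tequiv_apply, EuclideanSpace.norm_eq]
  simp [Fin.sum_univ_two, sq_abs]

lemma Tequiv_smul (r a b : ℝ) : Tequiv (r * a, r * b) = r • Tequiv (a, b) := by
  rw [Tequiv_apply, Tequiv_apply]
  ext i
  fin_cases i <;> rfl

theorem lintegral_comp_polarCoord_symm' (f : ℝ × ℝ → ℝ≥0∞) :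
    (∫⁻ p in polarCoord.target, ENNReal.ofReal p.1 * f (polarCoord.symm p)) = ∫⁻ p, f p := by
  set B : ℝ × ℝ → ℝ × ℝ →L[ℝ] ℝ × ℝ := fun p =>
    LinearMap.toContinuousLinearMap (Matrix.toLin (Module.Basis.finTwoProd ℝ) (Module.Basis.finTwoProd ℝ)
      !![Real.cos p.2, -p.1 * Real.sin p.2; Real.sin p.2, p.1 * Real.cos p.2]) with hB
  have B_det : ∀ p, (B p).det = p.1 := by
    intro p
    conv_rhs => rw [← one_mul p.1, ← Real.cos_sq_add_sin_sq p.2]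
    simp only [hB, neg_mul, LinearMap.det_toContinuousLinearMap, LinearMap.det_toLin,
      Matrix.det_fin_two_of, sub_neg_eq_add]
    ring
  symm
  calc
    ∫⁻ p, f p = ∫⁻ p in polarCoord.source, f p := by
      rw [← setLIntegral_univ]
      exact (setLIntegral_congr polarCoord_source_ae_eq_univ.symm)
    _ = ∫⁻ p in polarCoord.symm '' polarCoord.target, f p := by
      rw [OpenPartialHomeomorph.symm_image_target_eq_source]
    _ = ∫⁻ p in polarCoord.target, ENNReal.ofReal |(B p).det| * f (polarCoord.symm p) := by
      apply lintegral_image_eq_lintegral_abs_det_fderiv_mul volume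
        polarCoord.open_target.measurableSet
        (fun p _ => (hasFDerivAt_polarCoord_symm p).hasFDerivWithinAt)
        polarCoord.symm.injOn
    _ = ∫⁻ p in polarCoord.target, ENNReal.ofReal p.1 * f (polarCoord.symm p) := by
      apply setLIntegral_congr_fun polarCoord.open_target.measurableSet
      exact fun p hp => by rw [B_det, abs_of_pos hp.1]

theorem lintegral_polar_E (y : EuclideanSpace ℝ (Fin 2)) (g : EuclideanSpace ℝ (Fin 2) → ℝ≥0∞) :
    ∫⁻ x, g x = ∫⁻ p in polarCoord.target,
      ENNReal.ofReal p.1 * g (y + Tequiv (polarCoord.symm p)) := by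
  rw [lintegral_comp_polarCoord_symm' (fun q => g (y + Tequiv q))]
  rw [Tequiv_measurePreserving.lintegral_comp_emb Tequiv.measurableEmbedding (fun x => g (y + x))]
  exact (lintegral_add_left_eq_self g y).symm

lemma oneDim (f : ℝ → ℝ) (hf : ContDiff ℝ (⊤ : ℕ∞) f) {R₀ ρ : ℝ} (h0 : 0 < R₀) (hρ : R₀ < ρ)
    (hsupp : ∀ r, R₀ ≤ r → f r = 0) :
    ∫⁻ r in Ioo 0 R₀, ENNReal.ofReal (f r ^ 2 / (4 * r * (Real.log (ρ / r))^2)) ≤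
      ENNReal.ofReal (∫ r in Ioo 0 R₀, (deriv f r)^2 * r) := by
  have hρ0 : (0:ℝ) < ρ := h0.trans hρ
  set s : ℝ → ℝ := fun r => Real.log (ρ / r) with hs
  have hspos : ∀ r, 0 < r → r < ρ → 0 < s r := by
    intro r hr hrρ
    exact Real.log_pos ((one_lt_div hr).2 hrρ)
  set Q : ℝ → ℝ := fun r => f r ^ 2 / (4 * r * (s r)^2) with hQ
  set P : ℝ → ℝ := fun r => (deriv f r)^2 * r with hP
  have hfc : Continuous f := hf.continuous
  have hf' : Continuous (deriv f) := hf.continuous_deriv (by simp)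
  have hPc : Continuous P := ((hf'.pow 2).mul continuous_id)
  have hPnn : ∀ r, 0 ≤ r → 0 ≤ P r := fun r hr => mul_nonneg (sq_nonneg _) hr
  have hPint : IntegrableOn P (Ioo 0 R₀) :=
    (hPc.integrableOn_Icc (a := 0) (b := R₀)).mono_set Ioo_subset_Icc_self
  -- derivative of s
  have hsderiv : ∀ r : ℝ, 0 < r → HasDerivAt s (-r⁻¹) r := by
    intro r hr
    have h1 : ∀ᶠ x in 𝓝 r, Real.log ρ - Real.log x = s x := by
      filter_upwards [eventually_gt_nhds hr] with x hx
      show Real.log ρ - Real.log x = Real.log (ρ / x)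
      rw [Real.log_div (ne_of_gt hρ0) (ne_of_gt hx)]
    have h2 : HasDerivAt (fun x => Real.log ρ - Real.log x) (-r⁻¹) r := by
      simpa using (Real.hasDerivAt_log (ne_of_gt hr)).const_sub (Real.log ρ)
    exact h2.congr_of_eventuallyEq (h1.mono fun x hx => hx.symm)
  -- continuity of s and s ≠ 0 on (0, ρ)
  have hscont : ∀ r : ℝ, 0 < r → ContinuousAt s r := by
    intro r hr
    exact ((hsderiv r hr).differentiableAt).continuousAt
  -- g = s⁻¹ with derivative 1/(r s²)
  set g : ℝ → ℝ := fun r => (s r)⁻¹ with hg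
  have hgderiv : ∀ r ∈ Ioo (0:ℝ) R₀, HasDerivAt g (1 / (r * s r ^ 2)) r := by
    intro r hr
    have hsr : s r ≠ 0 := (hspos r hr.1 (hr.2.trans hρ)).ne'
    have h1 := (hsderiv r hr.1).fun_inv hsr
    refine h1.congr_deriv (Eq.symm ?_)
    field_simp
  have hgnonneg : ∀ r ∈ Ioo (0:ℝ) R₀, 0 ≤ 1 / (r * s r ^ 2) := by
    intro r hr
    apply div_nonneg zero_le_one
    exact mul_nonneg hr.1.le (sq_nonneg _)
  have hgcont : ContinuousOn g (Icc 0 R₀) := by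
    intro r hr
    rcases eq_or_lt_of_le hr.1 with h|h
    · rw [← h]
      rw [← continuousWithinAt_diff_self]
      have hsub : Icc (0:ℝ) R₀ \ {0} ⊆ Ioi 0 := by
        intro x hx
        exact lt_of_le_of_ne hx.1.1 (Ne.symm hx.2)
      have hg0 : g 0 = 0 := by simp [hg, hs]
      have h1 : Tendsto s (𝓝[>] (0:ℝ)) atTop := by
        have h2 : Tendsto (fun x : ℝ => Real.log ρ + -Real.log x) (𝓝[>] (0:ℝ)) atTop :=
          tendsto_atTop_add_const_left _ _
            (tendsto_neg_atBot_atTop.comp Real.tendsto_log_nhdsGT_zero)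
        apply h2.congr'
        filter_upwards [self_mem_nhdsWithin] with x hx
        show Real.log ρ + -Real.log x = Real.log (ρ / x)
        rw [Real.log_div (ne_of_gt hρ0) (ne_of_gt hx)]
        ring
      have h3 : Tendsto g (𝓝[>] (0:ℝ)) (𝓝 0) := h1.inv_tendsto_atTop
      have : ContinuousWithinAt g (Ioi 0) 0 := by
        unfold ContinuousWithinAt
        rwa [hg0]
      exact this.mono hsub
    · have hc : ContinuousAt g r :=
        (hscont r h).inv₀ (hspos r h (lt_of_le_of_lt hr.2 hρ)).ne'
      exact hc.continuousWithinAt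
  have hDint : IntegrableOn (fun r => 1 / (r * s r ^ 2)) (Ioo 0 R₀) :=
    (intervalIntegral.integrableOn_deriv_of_nonneg hgcont hgderiv hgnonneg).mono_set
      Ioo_subset_Ioc_self
  obtain ⟨M, hM⟩ := isCompact_Icc.exists_bound_of_continuousOn
    (hfc.continuousOn : ContinuousOn f (Icc 0 R₀))
  have hsmeas : Measurable s := Real.measurable_log.comp (measurable_const.div measurable_id)
  have hQmeas : Measurable Q :=
    ((hfc.measurable.pow_const 2).div
      ((measurable_const.mul measurable_id).mul (hsmeas.pow_const 2)))
  have hQint : IntegrableOn Q (Ioo 0 R₀) := by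
    apply Integrable.mono' (hDint.const_mul (M ^ 2 / 4)) hQmeas.aestronglyMeasurable
    rw [ae_restrict_iff' measurableSet_Ioo]
    refine .of_forall fun r hr => ?_
    have hsr : 0 < s r := hspos r hr.1 (hr.2.trans hρ)
    have hd : 0 < 4 * r * s r ^ 2 :=
      mul_pos (mul_pos four_pos hr.1) (pow_pos hsr 2)
    have hQnn : 0 ≤ Q r := div_nonneg (sq_nonneg _) hd.le
    rw [Real.norm_eq_abs, abs_of_nonneg hQnn]
    have hfb : f r ^ 2 ≤ M ^ 2 := by
      have h1 : |f r| ≤ M := hM r ⟨hr.1.le, hr.2.le⟩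
      calc f r ^ 2 = |f r| ^ 2 := (sq_abs _).symm
      _ ≤ M ^ 2 := pow_le_pow_left₀ (abs_nonneg _) h1 2
    calc Q r ≤ M ^ 2 / (4 * r * s r ^ 2) := by
          exact (div_le_div_iff_of_pos_right hd).2 hfb
    _ = M ^ 2 / 4 * (1 / (r * s r ^ 2)) := by
          rw [div_mul_div_comm, mul_one]
          ring_nf
  have hQaenn : 0 ≤ᵐ[volume.restrict (Ioo 0 R₀)] Q := by
    filter_upwards [ae_restrict_mem measurableSet_Ioo] with r hr
    have hd : 0 < 4 * r * s r ^ 2 :=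
      mul_pos (mul_pos four_pos hr.1) (pow_pos (hspos r hr.1 (hr.2.trans hρ)) 2)
    exact div_nonneg (sq_nonneg _) hd.le
  have key : ∀ a ∈ Ioo (0:ℝ) R₀, ∫ r in Ioo a R₀, Q r ≤ ∫ r in Ioo 0 R₀, P r := by
    intro a ha
    set I : ℝ → ℝ := fun r => f r * deriv f r / s r + f r ^ 2 / (2 * r * s r ^ 2) with hI
    set F : ℝ → ℝ := fun r => f r ^ 2 / (2 * s r) with hF
    have hmem : ∀ r ∈ uIcc a R₀, 0 < r ∧ r < ρ ∧ s r ≠ 0 := by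
      intro r hr
      rw [uIcc_of_le ha.2.le] at hr
      have h1 : 0 < r := lt_of_lt_of_le ha.1 hr.1
      have h2 : r < ρ := lt_of_le_of_lt hr.2 hρ
      exact ⟨h1, h2, (hspos r h1 h2).ne'⟩
    have hFderiv : ∀ r ∈ uIcc a R₀, HasDerivAt F (I r) r := by
      intro r hr
      obtain ⟨h1, h2, h3⟩ := hmem r hr
      have hfd : HasDerivAt f (deriv f r) r := (hf.differentiable (by simp) r).hasDerivAt
      have hn : HasDerivAt (fun x => f x ^ 2) (2 * f r * deriv f r) r := by
        have := hfd.fun_pow 2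
        simpa [mul_comm, mul_assoc] using this
      have hdenom : HasDerivAt (fun x => 2 * s x) (2 * -r⁻¹) r := (hsderiv r h1).const_mul 2
      have h2s : 2 * s r ≠ 0 := mul_ne_zero two_ne_zero h3
      have hdiv := hn.fun_div hdenom h2s
      refine hdiv.congr_deriv (Eq.symm ?_)
      show f r * deriv f r / s r + f r ^ 2 / (2 * r * s r ^ 2) = _
      field_simp
      ring
    have hscontOn : ContinuousOn s (uIcc a R₀) :=
      fun r hr => ((hscont r (hmem r hr).1).continuousWithinAt)
    have hIcont : ContinuousOn I (uIcc a R₀) := by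
      apply ContinuousOn.add
      · exact ((hfc.mul hf').continuousOn.div hscontOn (fun r hr => (hmem r hr).2.2))
      · apply ContinuousOn.div (hfc.pow 2).continuousOn
        · exact (continuous_const.continuousOn.mul continuous_id.continuousOn).mul
            (hscontOn.pow 2)
        · intro r hr
          obtain ⟨h1, _, h3⟩ := hmem r hr
          exact mul_ne_zero (mul_ne_zero two_ne_zero h1.ne') (pow_ne_zero 2 h3)
    have hftc := intervalIntegral.integral_eq_sub_of_hasDerivAt hFderiv
      (hIcont.intervalIntegrable)
    have hFR : F R₀ = 0 := by
      show f R₀ ^ 2 / (2 * s R₀) = 0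
      rw [hsupp R₀ le_rfl]
      simp
    have hFa : 0 ≤ F a :=
      div_nonneg (sq_nonneg _)
        (mul_nonneg two_pos.le (hspos a ha.1 (ha.2.trans hρ)).le)
    have hpoint : ∀ r ∈ Icc a R₀, Q r ≤ P r + I r := by
      intro r hr
      have hr' : r ∈ uIcc a R₀ := by rwa [uIcc_of_le ha.2.le]
      obtain ⟨h1, h2, h3⟩ := hmem r hr'
      have hsq : 0 ≤ r * (deriv f r + f r / (2 * r * s r)) ^ 2 :=
        mul_nonneg h1.le (sq_nonneg _)
      have hiden : P r + I r - Q r = r * (deriv f r + f r / (2 * r * s r)) ^ 2 := by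
        show deriv f r ^ 2 * r + (f r * deriv f r / s r + f r ^ 2 / (2 * r * s r ^ 2))
          - f r ^ 2 / (4 * r * s r ^ 2) = _
        field_simp
        ring
      have h9 := hsq
      rw [← hiden] at h9
      linarith
    have hQcont : ContinuousOn Q (uIcc a R₀) := by
      apply ContinuousOn.div (hfc.pow 2).continuousOn
      · exact ((continuous_const.continuousOn.mul continuous_id.continuousOn)).mul
          (hscontOn.pow 2)
      · intro r hr
        obtain ⟨h1, _, h3⟩ := hmem r hr
        exact mul_ne_zero (mul_ne_zero (by norm_num) h1.ne') (pow_ne_zero 2 h3)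
    have hQItg : IntervalIntegrable Q volume a R₀ := hQcont.intervalIntegrable
    have hPItg : IntervalIntegrable P volume a R₀ := hPc.intervalIntegrable _ _
    have hIItg : IntervalIntegrable I volume a R₀ := hIcont.intervalIntegrable
    have hmono := intervalIntegral.integral_mono_on ha.2.le hQItg (hPItg.add hIItg) hpoint
    have hsplit : ∫ r in a..R₀, (P r + I r) = (∫ r in a..R₀, P r) + (F R₀ - F a) := by
      rw [intervalIntegral.integral_add hPItg hIItg, hftc]
    have h5 : ∫ r in a..R₀, Q r ≤ ∫ r in a..R₀, P r := by
      rw [hsplit, hFR] at hmono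
      linarith
    have hQset : ∫ r in a..R₀, Q r = ∫ r in Ioo a R₀, Q r := by
      rw [intervalIntegral.integral_of_le ha.2.le, integral_Ioc_eq_integral_Ioo]
    have hPset : ∫ r in a..R₀, P r = ∫ r in Ioo a R₀, P r := by
      rw [intervalIntegral.integral_of_le ha.2.le, integral_Ioc_eq_integral_Ioo]
    have h6 : ∫ r in Ioo a R₀, P r ≤ ∫ r in Ioo 0 R₀, P r := by
      apply setIntegral_mono_set hPint
      · filter_upwards [ae_restrict_mem measurableSet_Ioo] with r hr
        exact hPnn r hr.1.le
      · exact HasSubset.Subset.eventuallyLE (Ioo_subset_Ioo ha.1.le le_rfl)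
    rw [hQset, hPset] at h5
    linarith
  -- limit a → 0
  have hU : (⋃ n : ℕ, Ioo (R₀ / (n + 2)) R₀) = Ioo 0 R₀ := by
    ext r
    simp only [mem_iUnion, mem_Ioo]
    constructor
    · rintro ⟨n, hn1, hn2⟩
      refine ⟨lt_trans ?_ hn1, hn2⟩
      positivity
    · rintro ⟨hr1, hr2⟩
      obtain ⟨n, hn⟩ := exists_nat_gt (R₀ / r)
      refine ⟨n, ?_, hr2⟩
      rw [div_lt_iff₀ (by positivity)]
      rw [div_lt_iff₀ hr1] at hn
      nlinarith [hr1]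
  have hmonoseq : Monotone (fun n : ℕ => Ioo (R₀ / ((n:ℝ) + 2)) R₀) := by
    intro m n hmn
    apply Ioo_subset_Ioo _ le_rfl
    apply div_le_div_of_nonneg_left h0.le (by positivity)
    have : (m:ℝ) ≤ n := Nat.cast_le.2 hmn
    linarith
  have hQintU : IntegrableOn Q (⋃ n : ℕ, Ioo (R₀ / ((n:ℝ) + 2)) R₀) := by
    rwa [hU]
  have htend := tendsto_setIntegral_of_monotone (fun n => measurableSet_Ioo) hmonoseq hQintU
  have hlim0 : ∫ r in (⋃ n : ℕ, Ioo (R₀ / ((n:ℝ) + 2)) R₀), Q r ≤ ∫ r in Ioo 0 R₀, P r := by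
    apply le_of_tendsto htend
    refine .of_forall fun n => ?_
    have han : R₀ / ((n:ℝ) + 2) ∈ Ioo (0:ℝ) R₀ := by
      constructor
      · positivity
      · rw [div_lt_iff₀ (by positivity)]
        nlinarith [Nat.cast_nonneg (α := ℝ) n, h0]
    exact key _ han
  have hlim : ∫ r in Ioo 0 R₀, Q r ≤ ∫ r in Ioo 0 R₀, P r := by rwa [hU] at hlim0
  calc ∫⁻ r in Ioo 0 R₀, ENNReal.ofReal (Q r)
      = ENNReal.ofReal (∫ r in Ioo 0 R₀, Q r) :=
        (ofReal_integral_eq_lintegral_ofReal hQint hQaenn).symm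
    _ ≤ ENNReal.ofReal (∫ r in Ioo 0 R₀, P r) := ENNReal.ofReal_le_ofReal hlim

lemma Tequiv_continuous : Continuous (Tequiv : ℝ × ℝ → EuclideanSpace ℝ (Fin 2)) := by
  have h : (Tequiv : ℝ × ℝ → EuclideanSpace ℝ (Fin 2)) =
      fun q => (WithLp.equiv 2 (Fin 2 → ℝ)).symm ![q.1, q.2] := by
    funext q; exact Tequiv_apply q
  rw [h]
  have h2 : Continuous fun q : ℝ × ℝ => (![q.1, q.2] : Fin 2 → ℝ) := by
    apply continuous_pi
    intro i
    fin_cases i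
    · exact continuous_fst
    · exact continuous_snd
  exact (PiLp.continuous_toLp 2 (fun _ : Fin 2 => ℝ)).comp h2

lemma poleBound (φ : EuclideanSpace ℝ (Fin 2) → ℝ) (hφ : ContDiff ℝ (⊤ : ℕ∞) φ)
    (y : EuclideanSpace ℝ (Fin 2)) {R₀ ρ : ℝ} (h0 : 0 < R₀) (hρ : R₀ < ρ)
    (hsupp : ∀ x, R₀ ≤ ‖x - y‖ → φ x = 0) :
    ∫⁻ x, ENNReal.ofReal ((4 * ‖x - y‖^2 * (Real.log (ρ / ‖x - y‖))^2)⁻¹ * φ x ^ 2) ≤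
      ENNReal.ofReal (∫ x, ‖gradient φ x‖ ^ 2) := by
  have hφc : Continuous φ := hφ.continuous
  have hgradnorm : ∀ x, ‖gradient φ x‖ = ‖fderiv ℝ φ x‖ := fun x =>
    LinearIsometryEquiv.norm_map _ _
  have hfderivc : Continuous (fderiv ℝ φ) := hφ.continuous_fderiv (by simp)
  have hgradc : Continuous (fun x => ‖gradient φ x‖ ^ 2) := by
    have h : (fun x => ‖gradient φ x‖ ^ 2) = fun x => ‖fderiv ℝ φ x‖ ^ 2 := by
      funext x; rw [hgradnorm]
    rw [h]; exact hfderivc.norm.pow 2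
  have hcs : HasCompactSupport φ := by
    apply HasCompactSupport.intro (isCompact_closedBall y R₀)
    intro x hx
    apply hsupp
    rw [Metric.mem_closedBall, not_le, dist_eq_norm] at hx
    exact hx.le
  have hgradcs : HasCompactSupport (fun x => ‖gradient φ x‖ ^ 2) := by
    have h1 : HasCompactSupport (fderiv ℝ φ) := hcs.fderiv ℝ
    have h2 := h1.comp_left (g := fun L : EuclideanSpace ℝ (Fin 2) →L[ℝ] ℝ => ‖L‖ ^ 2)
      (by simp)
    have h : (fun x => ‖gradient φ x‖ ^ 2) = (fun L : EuclideanSpace ℝ (Fin 2) →L[ℝ] ℝ => ‖L‖ ^ 2) ∘ (fderiv ℝ φ) := by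
      funext x; simp [Function.comp, hgradnorm]
    rw [h]; exact h2
  have hgradint : Integrable (fun x => ‖gradient φ x‖ ^ 2) :=
    hgradc.integrable_of_hasCompactSupport hgradcs
  -- per-ray inequality
  have inner : ∀ v : EuclideanSpace ℝ (Fin 2), ‖v‖ = 1 →
      ∫⁻ r in Ioi (0:ℝ), ENNReal.ofReal r *
        ENNReal.ofReal ((4 * ‖y + r • v - y‖^2 * (Real.log (ρ / ‖y + r • v - y‖))^2)⁻¹
          * φ (y + r • v) ^ 2)
      ≤ ∫⁻ r in Ioi (0:ℝ), ENNReal.ofReal r *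
        ENNReal.ofReal (‖gradient φ (y + r • v)‖ ^ 2) := by
    intro v hv
    have hnorm : ∀ r : ℝ, 0 ≤ r → ‖y + r • v - y‖ = r := by
      intro r hr
      rw [add_sub_cancel_left, norm_smul, hv, mul_one, Real.norm_eq_abs, abs_of_nonneg hr]
    set f : ℝ → ℝ := fun r => φ (y + r • v) with hfdef
    have hfsm : ContDiff ℝ (⊤ : ℕ∞) f :=
      hφ.comp (contDiff_const.add (contDiff_id.smul contDiff_const))
    have hfzero : ∀ r, R₀ ≤ r → f r = 0 := by
      intro r hr
      apply hsupp
      rw [hnorm r (h0.le.trans hr)]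
      exact hr
    have hfd : ∀ r : ℝ, HasDerivAt f (fderiv ℝ φ (y + r • v) v) r := by
      intro r
      have hline : HasDerivAt (fun t : ℝ => y + t • v) v r := by
        simpa using ((hasDerivAt_id r).smul_const v).const_add y
      exact ((hφ.differentiable (by simp) _).hasFDerivAt).comp_hasDerivAt r hline
    have hderiveq : deriv f = fun r => fderiv ℝ φ (y + r • v) v := by
      funext r; exact (hfd r).deriv
    have hderivle : ∀ r : ℝ, (deriv f r) ^ 2 ≤ ‖gradient φ (y + r • v)‖ ^ 2 := by
      intro r
      rw [hderiveq, hgradnorm]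
      have h1 : |fderiv ℝ φ (y + r • v) v| ≤ ‖fderiv ℝ φ (y + r • v)‖ := by
        have h2 := (fderiv ℝ φ (y + r • v)).le_opNorm v
        rwa [hv, mul_one, Real.norm_eq_abs] at h2
      calc (fderiv ℝ φ (y + r • v) v) ^ 2 = |fderiv ℝ φ (y + r • v) v| ^ 2 := (sq_abs _).symm
        _ ≤ ‖fderiv ℝ φ (y + r • v)‖ ^ 2 := pow_le_pow_left₀ (abs_nonneg _) h1 2
    -- rewrite LHS integrand
    have hcong1 : ∀ᵐ r ∂volume, r ∈ Ioi (0:ℝ) →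
        ENNReal.ofReal r * ENNReal.ofReal
          ((4 * ‖y + r • v - y‖^2 * (Real.log (ρ / ‖y + r • v - y‖))^2)⁻¹ * φ (y + r • v) ^ 2)
        = ENNReal.ofReal (f r ^ 2 / (4 * r * (Real.log (ρ / r))^2)) := by
      refine .of_forall fun r hr => ?_
      have hr0 : (0:ℝ) < r := hr
      rw [hnorm r hr0.le, ← ENNReal.ofReal_mul hr0.le]
      congr 1
      rcases eq_or_ne (Real.log (ρ / r)) 0 with h|h
      · rw [h]; simp
      · field_simp
        ring
    rw [setLIntegral_congr_fun_ae measurableSet_Ioi hcong1]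
    have hsplitset : Ioo (0:ℝ) R₀ ∪ Ici R₀ = Ioi 0 := Ioo_union_Ici_eq_Ioi h0
    have hdisj : Disjoint (Ioo (0:ℝ) R₀) (Ici R₀) := by
      rw [Set.disjoint_left]
      intro r hr hr2
      exact absurd hr.2 (not_lt.2 hr2)
    rw [← hsplitset, lintegral_union measurableSet_Ici hdisj]
    have h2z : ∫⁻ r in Ici R₀, ENNReal.ofReal (f r ^ 2 / (4 * r * (Real.log (ρ / r))^2)) = 0 := by
      have hz : ∀ᵐ r ∂volume, r ∈ Ici R₀ →
          ENNReal.ofReal (f r ^ 2 / (4 * r * (Real.log (ρ / r))^2)) = 0 := by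
        refine .of_forall fun r hr => ?_
        rw [hfzero r hr]
        simp
      rw [setLIntegral_congr_fun_ae measurableSet_Ici hz, lintegral_zero]
    rw [h2z, add_zero]
    -- apply the 1D Hardy inequality
    refine le_trans (oneDim f hfsm h0 hρ hfzero) ?_
    -- gradient side on the ray
    have hDc : Continuous (fun r : ℝ => ‖gradient φ (y + r • v)‖ ^ 2 * r) := by
      apply Continuous.mul _ continuous_id
      exact hgradc.comp (continuous_const.add (continuous_id.smul continuous_const))
    have hDint : IntegrableOn (fun r : ℝ => ‖gradient φ (y + r • v)‖ ^ 2 * r) (Ioo 0 R₀) :=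
      (hDc.integrableOn_Icc (a := 0) (b := R₀)).mono_set Ioo_subset_Icc_self
    have hPc : Continuous (fun r : ℝ => (deriv f r) ^ 2 * r) := by
      apply Continuous.mul _ continuous_id
      rw [hderiveq]
      have hc2 : Continuous (fun r : ℝ => fderiv ℝ φ (y + r • v) v) :=
        (hfderivc.comp (continuous_const.add (continuous_id.smul continuous_const))).clm_apply
          continuous_const
      exact hc2.pow 2
    have hd2 : ∫ r in Ioo (0:ℝ) R₀, (deriv f r) ^ 2 * r ≤
        ∫ r in Ioo (0:ℝ) R₀, ‖gradient φ (y + r • v)‖ ^ 2 * r := by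
      apply setIntegral_mono_on
        ((hPc.integrableOn_Icc (a := 0) (b := R₀)).mono_set Ioo_subset_Icc_self)
        hDint measurableSet_Ioo
      intro r hr
      exact mul_le_mul_of_nonneg_right (hderivle r) hr.1.le
    refine le_trans (ENNReal.ofReal_le_ofReal hd2) ?_
    rw [ofReal_integral_eq_lintegral_ofReal hDint ?nonneg]
    case nonneg =>
      filter_upwards [ae_restrict_mem measurableSet_Ioo] with r hr
      exact mul_nonneg (sq_nonneg _) hr.1.le
    have hcong2 : ∀ᵐ r ∂volume, r ∈ Ioo (0:ℝ) R₀ →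
        ENNReal.ofReal (‖gradient φ (y + r • v)‖ ^ 2 * r)
        = ENNReal.ofReal r * ENNReal.ofReal (‖gradient φ (y + r • v)‖ ^ 2) := by
      refine .of_forall fun r hr => ?_
      rw [← ENNReal.ofReal_mul hr.1.le, mul_comm]
    rw [setLIntegral_congr_fun_ae measurableSet_Ioo hcong2]
    exact lintegral_mono_set subset_union_left
  -- Fubini helper
  have fub : ∀ F : ℝ × ℝ → ℝ≥0∞, Measurable F →
      ∫⁻ p in Ioi (0:ℝ) ×ˢ Ioo (-π) π, F p =
        ∫⁻ θ in Ioo (-π) π, ∫⁻ r in Ioi (0:ℝ), F (r, θ) := by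
    intro F hF
    rw [Measure.volume_eq_prod, ← Measure.prod_restrict]
    exact lintegral_prod_symm F hF.aemeasurable
  have hsymmc : Continuous fun p : ℝ × ℝ => y + Tequiv (polarCoord.symm p) := by
    have h1 : (polarCoord.symm : ℝ × ℝ → ℝ × ℝ) =
        fun p : ℝ × ℝ => (p.1 * Real.cos p.2, p.1 * Real.sin p.2) :=
      funext fun p => polarCoord_symm_apply p
    apply continuous_const.add
    apply Tequiv_continuous.comp
    rw [h1]
    exact (continuous_fst.mul (Real.continuous_cos.comp continuous_snd)).prodMk
      (continuous_fst.mul (Real.continuous_sin.comp continuous_snd))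
  have hnormc : Continuous fun x : EuclideanSpace ℝ (Fin 2) => ‖x - y‖ :=
    (continuous_id.sub continuous_const).norm
  have hWm : Measurable fun x : EuclideanSpace ℝ (Fin 2) =>
      (4 * ‖x - y‖^2 * (Real.log (ρ / ‖x - y‖))^2)⁻¹ :=
    ((measurable_const.mul (hnormc.measurable.pow_const 2)).mul
      ((Real.measurable_log.comp (measurable_const.div hnormc.measurable)).pow_const 2)).inv
  have hmeas1 : Measurable fun p : ℝ × ℝ => ENNReal.ofReal p.1 * ENNReal.ofReal
      ((4 * ‖y + Tequiv (polarCoord.symm p) - y‖^2 *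
        (Real.log (ρ / ‖y + Tequiv (polarCoord.symm p) - y‖))^2)⁻¹
        * φ (y + Tequiv (polarCoord.symm p)) ^ 2) := by
    apply Measurable.mul measurable_fst.ennreal_ofReal
    apply Measurable.ennreal_ofReal
    exact (hWm.comp hsymmc.measurable).mul
      ((hφc.measurable.comp hsymmc.measurable).pow_const 2)
  have hmeas2 : Measurable fun p : ℝ × ℝ => ENNReal.ofReal p.1 * ENNReal.ofReal
      (‖gradient φ (y + Tequiv (polarCoord.symm p))‖ ^ 2) := by
    apply Measurable.mul measurable_fst.ennreal_ofReal
    exact (hgradc.measurable.comp hsymmc.measurable).ennreal_ofReal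
  have hLHS := lintegral_polar_E y (fun x => ENNReal.ofReal
    ((4 * ‖x - y‖^2 * (Real.log (ρ / ‖x - y‖))^2)⁻¹ * φ x ^ 2))
  have hRHSpolar := lintegral_polar_E y (fun x => ENNReal.ofReal (‖gradient φ x‖ ^ 2))
  rw [ofReal_integral_eq_lintegral_ofReal hgradint (.of_forall fun x => sq_nonneg _)]
  rw [hLHS, hRHSpolar]
  have htarget : polarCoord.target = Ioi (0:ℝ) ×ˢ Ioo (-π) π := rfl
  rw [htarget, fub _ hmeas1, fub _ hmeas2]
  apply lintegral_mono
  intro θ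
  have hvnorm : ‖Tequiv (Real.cos θ, Real.sin θ)‖ = 1 := by
    rw [Tequiv_norm]
    simp [Real.cos_sq_add_sin_sq]
  have h := inner (Tequiv (Real.cos θ, Real.sin θ)) hvnorm
  simp only [polarCoord_symm_apply, Tequiv_smul]
  exact h

/-- Multipole logarithmic Hardy inequality in dimension 2: for finitely many poles
`p i` and any `R` larger than all `‖p i‖`, there is a nonnegative weight `h` with
`∫ |∇φ|² ≥ ∫ h φ²` for smooth `φ` compactly supported in the disc `D(0,R)`, and
`h(x) ~ cᵢ / (|x - pᵢ|² (ln |x - pᵢ|)²)` at each pole. -/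
theorem stmt_1 (N : ℕ) (hN : 0 < N) (p : Fin N → EuclideanSpace ℝ (Fin 2))
    (R : ℝ) (hR : ∀ i, ‖p i‖ < R) :
    ∃ (h : EuclideanSpace ℝ (Fin 2) → ℝ) (c : Fin N → ℝ),
      Measurable h ∧ (∀ x, 0 ≤ h x) ∧ (∀ i, 0 < c i) ∧
      (∀ φ : EuclideanSpace ℝ (Fin 2) → ℝ, ContDiff ℝ (⊤ : ℕ∞) φ → HasCompactSupport φ →
        tsupport φ ⊆ Metric.ball 0 R →
        (∫ x, ‖gradient φ x‖ ^ 2) ≥ ∫ x, h x * φ x ^ 2) ∧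
      (∀ i, Filter.Tendsto
        (fun x => h x * ‖x - p i‖ ^ 2 * (Real.log ‖x - p i‖) ^ 2)
        (nhdsWithin (p i) {p i}ᶜ) (nhds (c i))) := by
  classical
  have hR0 : (0:ℝ) < R := lt_of_le_of_lt (norm_nonneg (p ⟨0, hN⟩)) (hR ⟨0, hN⟩)
  have hNR : (0:ℝ) < (N:ℝ) := Nat.cast_pos.2 hN
  refine ⟨fun x => (N:ℝ)⁻¹ * ∑ j, (4 * ‖x - p j‖^2 *
      (Real.log ((2*R+1) / ‖x - p j‖))^2)⁻¹,
    fun i => ((Finset.univ.filter fun j => p j = p i).card : ℝ) * ((N:ℝ)⁻¹ / 4),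
    ?_, ?_, ?_, ?_, ?_⟩
  · -- measurability
    apply Measurable.const_mul
    apply Finset.measurable_sum
    intro j _
    exact ((measurable_const.mul
        (((continuous_id.sub continuous_const).norm).measurable.pow_const 2)).mul
      ((Real.measurable_log.comp
        (measurable_const.div ((continuous_id.sub continuous_const).norm).measurable)).pow_const
          2)).inv
  · -- nonnegativity
    intro x
    apply mul_nonneg (inv_nonneg.2 (Nat.cast_nonneg N))
    apply Finset.sum_nonneg
    intro j _
    apply inv_nonneg.2
    positivity
  · -- positivity of c
    intro i
    apply mul_pos _ (by positivity)
    have hmem : i ∈ Finset.univ.filter fun j => p j = p i :=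
      Finset.mem_filter.2 ⟨Finset.mem_univ i, rfl⟩
    exact_mod_cast Finset.card_pos.2 ⟨i, hmem⟩
  · -- the Hardy inequality
    intro φ hφ hcs hsuppφ
    set ρ : ℝ := 2 * R + 1 with hρdef
    set W : Fin N → EuclideanSpace ℝ (Fin 2) → ℝ := fun j x =>
      (4 * ‖x - p j‖^2 * (Real.log (ρ / ‖x - p j‖))^2)⁻¹ with hWdef
    have hWnn : ∀ j x, 0 ≤ W j x := by
      intro j x
      apply inv_nonneg.2
      positivity
    have hWm : ∀ j, Measurable (W j) := by
      intro j
      exact ((measurable_const.mul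
          (((continuous_id.sub continuous_const).norm).measurable.pow_const 2)).mul
        ((Real.measurable_log.comp
          (measurable_const.div
            ((continuous_id.sub continuous_const).norm).measurable)).pow_const 2)).inv
    have hφc : Continuous φ := hφ.continuous
    have hgradnorm : ∀ x, ‖gradient φ x‖ = ‖fderiv ℝ φ x‖ := fun x =>
      LinearIsometryEquiv.norm_map _ _
    have hgradc : Continuous (fun x => ‖gradient φ x‖ ^ 2) := by
      have h : (fun x => ‖gradient φ x‖ ^ 2) = fun x => ‖fderiv ℝ φ x‖ ^ 2 := by
        funext x; rw [hgradnorm]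
      rw [h]; exact (hφ.continuous_fderiv (by simp)).norm.pow 2
    have hgradcs : HasCompactSupport (fun x => ‖gradient φ x‖ ^ 2) := by
      have h1 : HasCompactSupport (fderiv ℝ φ) := hcs.fderiv ℝ
      have h2 := h1.comp_left
        (g := fun L : EuclideanSpace ℝ (Fin 2) →L[ℝ] ℝ => ‖L‖ ^ 2) (by simp)
      have h : (fun x => ‖gradient φ x‖ ^ 2) =
          (fun L : EuclideanSpace ℝ (Fin 2) →L[ℝ] ℝ => ‖L‖ ^ 2) ∘ (fderiv ℝ φ) := by
        funext x; simp [Function.comp, hgradnorm]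
      rw [h]; exact h2
    have hgradint : Integrable (fun x => ‖gradient φ x‖ ^ 2) :=
      hgradc.integrable_of_hasCompactSupport hgradcs
    set K : ℝ := ∫ x, ‖gradient φ x‖ ^ 2 with hKdef
    have hKnn : (0:ℝ) ≤ K := integral_nonneg fun x => sq_nonneg _
    have hbound : ∀ j : Fin N, ∫⁻ x, ENNReal.ofReal (W j x * φ x ^ 2) ≤ ENNReal.ofReal K := by
      intro j
      apply poleBound φ hφ (p j) (R₀ := R + ‖p j‖) (ρ := ρ)
      · positivity
      · have := hR j
        rw [hρdef]
        linarith
      · intro x hx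
        apply image_eq_zero_of_notMem_tsupport
        intro hmem
        have h1 := hsuppφ hmem
        rw [Metric.mem_ball, dist_zero_right] at h1
        have h2 : ‖x - p j‖ ≤ ‖x‖ + ‖p j‖ := norm_sub_le _ _
        linarith
    have hmeas : ∀ j, Measurable (fun x => W j x * φ x ^ 2) :=
      fun j => (hWm j).mul (hφc.measurable.pow_const 2)
    have hkey : ∫⁻ x, ENNReal.ofReal (((N:ℝ)⁻¹ * ∑ j, W j x) * φ x ^ 2) ≤ ENNReal.ofReal K := by
      have heq : ∀ x, ENNReal.ofReal (((N:ℝ)⁻¹ * ∑ j, W j x) * φ x ^ 2)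
          = ENNReal.ofReal ((N:ℝ)⁻¹) * ∑ j, ENNReal.ofReal (W j x * φ x ^ 2) := by
        intro x
        have h1 : ((N:ℝ)⁻¹ * ∑ j, W j x) * φ x ^ 2
            = (N:ℝ)⁻¹ * ∑ j, (W j x * φ x ^ 2) := by
          rw [mul_assoc, Finset.sum_mul]
        rw [h1, ENNReal.ofReal_mul (inv_nonneg.2 (Nat.cast_nonneg N)),
          ENNReal.ofReal_sum_of_nonneg (fun j _ => mul_nonneg (hWnn j x) (sq_nonneg _))]
      calc ∫⁻ x, ENNReal.ofReal (((N:ℝ)⁻¹ * ∑ j, W j x) * φ x ^ 2)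
          = ENNReal.ofReal ((N:ℝ)⁻¹) *
            ∑ j, ∫⁻ x, ENNReal.ofReal (W j x * φ x ^ 2) := by
            simp_rw [heq]
            rw [lintegral_const_mul _ (Finset.measurable_sum _
              (fun j _ => (hmeas j).ennreal_ofReal)),
              lintegral_finset_sum _ (fun j _ => (hmeas j).ennreal_ofReal)]
        _ ≤ ENNReal.ofReal ((N:ℝ)⁻¹) * ∑ _j : Fin N, ENNReal.ofReal K := by
            exact mul_le_mul_right (Finset.sum_le_sum fun j _ => hbound j) _
        _ = ENNReal.ofReal ((N:ℝ)⁻¹) * ((N : ℝ≥0∞) * ENNReal.ofReal K) := by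
            rw [Finset.sum_const, Finset.card_univ, Fintype.card_fin, nsmul_eq_mul]
        _ = ENNReal.ofReal K := by
            rw [← mul_assoc, ENNReal.ofReal_inv_of_pos hNR, ENNReal.ofReal_natCast,
              ENNReal.inv_mul_cancel (by exact_mod_cast hN.ne') (ENNReal.natCast_ne_top N),
              one_mul]
    have hnn : ∀ x, 0 ≤ ((N:ℝ)⁻¹ * ∑ j, W j x) * φ x ^ 2 := by
      intro x
      apply mul_nonneg _ (sq_nonneg _)
      exact mul_nonneg (inv_nonneg.2 (Nat.cast_nonneg N))
        (Finset.sum_nonneg fun j _ => hWnn j x)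
    have hhm : Measurable (fun x => ((N:ℝ)⁻¹ * ∑ j, W j x) * φ x ^ 2) :=
      ((measurable_const.mul (Finset.measurable_sum _ (fun j _ => hWm j))).mul
        (hφc.measurable.pow_const 2))
    rw [ge_iff_le]
    have hfinal : ∫ x, ((N:ℝ)⁻¹ * ∑ j, W j x) * φ x ^ 2 ≤ K := by
      rw [integral_eq_lintegral_of_nonneg_ae (.of_forall hnn) hhm.aestronglyMeasurable]
      calc (∫⁻ x, ENNReal.ofReal (((N:ℝ)⁻¹ * ∑ j, W j x) * φ x ^ 2)).toReal
          ≤ (ENNReal.ofReal K).toReal := by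
            apply ENNReal.toReal_mono ENNReal.ofReal_ne_top hkey
        _ = K := ENNReal.toReal_ofReal hKnn
    exact hfinal
  · -- the limits
    intro i
    beta_reduce
    set ρ : ℝ := 2 * R + 1 with hρdef
    have hρpos : (0:ℝ) < ρ := by rw [hρdef]; linarith
    have hc : ((Finset.univ.filter fun j => p j = p i).card : ℝ) * ((N:ℝ)⁻¹ / 4)
        = ∑ j : Fin N, (if p j = p i then (N:ℝ)⁻¹ / 4 else 0) := by
      rw [Finset.sum_ite, Finset.sum_const, Finset.sum_const_zero, add_zero, nsmul_eq_mul]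
    rw [hc]
    have hnc : Continuous fun x : EuclideanSpace ℝ (Fin 2) => ‖x - p i‖ :=
      (continuous_id.sub continuous_const).norm
    have hdlim : Tendsto (fun x : EuclideanSpace ℝ (Fin 2) => ‖x - p i‖)
        (𝓝[≠] (p i)) (𝓝[>] 0) := by
      rw [tendsto_nhdsWithin_iff]
      constructor
      · have h1 := (hnc.tendsto (p i)).mono_left (nhdsWithin_le_nhds (s := {p i}ᶜ))
        simpa using h1
      · filter_upwards [self_mem_nhdsWithin] with x hx
        rw [mem_Ioi, norm_pos_iff]
        exact sub_ne_zero.2 hx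
    have hsumlim : Tendsto (fun x => ∑ j : Fin N,
        (N:ℝ)⁻¹ * (4 * ‖x - p j‖^2 * (Real.log (ρ / ‖x - p j‖))^2)⁻¹
          * ‖x - p i‖^2 * (Real.log ‖x - p i‖)^2)
        (𝓝[≠] (p i)) (𝓝 (∑ j : Fin N, (if p j = p i then (N:ℝ)⁻¹ / 4 else 0))) := by
      apply tendsto_finset_sum
      intro j _
      by_cases hje : p j = p i
      · rw [if_pos hje, hje]
        have hg : Tendsto (fun t : ℝ =>
            (N:ℝ)⁻¹ * (4 * t^2 * (Real.log (ρ/t))^2)⁻¹ * t^2 * (Real.log t)^2)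
            (𝓝[>] 0) (𝓝 ((N:ℝ)⁻¹ / 4)) := by
          have hev : Ioo (0:ℝ) (min 1 ρ) ∈ 𝓝[>] (0:ℝ) :=
            Ioo_mem_nhdsGT_of_mem ⟨le_rfl, by positivity⟩
          have hinv : Tendsto (fun t : ℝ => (Real.log t)⁻¹) (𝓝[>] (0:ℝ)) (𝓝 0) := by
            have ha : Tendsto (fun t : ℝ => -Real.log t) (𝓝[>] (0:ℝ)) atTop :=
              tendsto_neg_atBot_atTop.comp Real.tendsto_log_nhdsGT_zero
            have hb := ha.inv_tendsto_atTop
            have hc2 := hb.neg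
            rw [neg_zero] at hc2
            apply hc2.congr
            intro t
            show -(-Real.log t)⁻¹ = (Real.log t)⁻¹
            rw [inv_neg, neg_neg]
          have h1 : Tendsto (fun t : ℝ => Real.log ρ * (Real.log t)⁻¹ - 1)
              (𝓝[>] (0:ℝ)) (𝓝 (Real.log ρ * 0 - 1)) :=
            (hinv.const_mul (Real.log ρ)).sub_const 1
          have h2 := h1.inv₀ (by norm_num : Real.log ρ * 0 - 1 ≠ 0)
          have hratio : Tendsto (fun t : ℝ => Real.log t / Real.log (ρ/t))
              (𝓝[>] (0:ℝ)) (𝓝 (-1)) := by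
            have h3 : Tendsto (fun t : ℝ => (Real.log ρ * (Real.log t)⁻¹ - 1)⁻¹)
                (𝓝[>] (0:ℝ)) (𝓝 (-1)) := by
              convert h2 using 2
              norm_num
            apply h3.congr'
            filter_upwards [hev] with t ht
            have ht1 : t < 1 := lt_of_lt_of_le ht.2 (min_le_left _ _)
            have htρ : t < ρ := lt_of_lt_of_le ht.2 (min_le_right _ _)
            have hlt0 : Real.log t < 0 := Real.log_neg ht.1 ht1
            have hA : Real.log ρ * (Real.log t)⁻¹ - 1
                = (Real.log ρ - Real.log t) / Real.log t := by
              rw [sub_div, div_self hlt0.ne, ← div_eq_mul_inv]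
            rw [Real.log_div hρpos.ne' ht.1.ne', hA, inv_div]
          have h4 : Tendsto (fun t : ℝ =>
              (N:ℝ)⁻¹ / 4 * (Real.log t / Real.log (ρ/t))^2)
              (𝓝[>] (0:ℝ)) (𝓝 ((N:ℝ)⁻¹ / 4 * (-1:ℝ)^2)) :=
            (hratio.pow 2).const_mul _
          have h5 : Tendsto (fun t : ℝ =>
              (N:ℝ)⁻¹ / 4 * (Real.log t / Real.log (ρ/t))^2)
              (𝓝[>] (0:ℝ)) (𝓝 ((N:ℝ)⁻¹ / 4)) := by
            convert h4 using 2
            norm_num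
          have alg : ∀ a b c : ℝ, a ≠ 0 → b ≠ 0 →
              (N:ℝ)⁻¹ / 4 * (c / b)^2 = (N:ℝ)⁻¹ * (4 * a^2 * b^2)⁻¹ * a^2 * c^2 := by
            intro a b c ha hb
            field_simp
          apply h5.congr'
          filter_upwards [hev] with t ht
          have htρ : t < ρ := lt_of_lt_of_le ht.2 (min_le_right _ _)
          have hL : 0 < Real.log (ρ / t) := Real.log_pos ((one_lt_div ht.1).2 htρ)
          exact alg t (Real.log (ρ/t)) (Real.log t) ht.1.ne' hL.ne'
        exact hg.comp hdlim
      · rw [if_neg hje]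
        have hd : 0 < ‖p i - p j‖ := by
          rw [norm_pos_iff]
          exact sub_ne_zero.2 (Ne.symm hje)
        have hdρ : ‖p i - p j‖ < ρ := by
          have h1 : ‖p i - p j‖ ≤ ‖p i‖ + ‖p j‖ := norm_sub_le _ _
          have h2 := hR i
          have h3 := hR j
          rw [hρdef]
          linarith
        have hnj : Continuous fun x : EuclideanSpace ℝ (Fin 2) => ‖x - p j‖ :=
          (continuous_id.sub continuous_const).norm
        have hWcont : ContinuousAt
            (fun x => (4 * ‖x - p j‖^2 * (Real.log (ρ / ‖x - p j‖))^2)⁻¹) (p i) := by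
          apply ContinuousAt.inv₀
          · apply ContinuousAt.mul
            · exact continuousAt_const.mul ((hnj.continuousAt).pow 2)
            · apply ContinuousAt.pow
              exact (continuousAt_const.div hnj.continuousAt hd.ne').log
                (ne_of_gt (div_pos hρpos hd))
          · have hlog : 0 < Real.log (ρ / ‖p i - p j‖) :=
              Real.log_pos ((one_lt_div hd).2 hdρ)
            positivity
        have hrl : Tendsto (fun t : ℝ => (t * Real.log t)^2) (𝓝[>] (0:ℝ)) (𝓝 0) := by
          have h1 := tendsto_log_mul_rpow_nhdsGT_zero zero_lt_one
          have h2 : Tendsto (fun t : ℝ => t * Real.log t) (𝓝[>] (0:ℝ)) (𝓝 0) := by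
            apply h1.congr'
            filter_upwards [self_mem_nhdsWithin] with t ht
            rw [Real.rpow_one, mul_comm]
          have h3 := h2.pow 2
          simpa using h3
        have hA : Tendsto (fun x =>
            (N:ℝ)⁻¹ * (4 * ‖x - p j‖^2 * (Real.log (ρ / ‖x - p j‖))^2)⁻¹)
            (𝓝[≠] (p i))
            (𝓝 ((N:ℝ)⁻¹ * (4 * ‖p i - p j‖^2 * (Real.log (ρ / ‖p i - p j‖))^2)⁻¹)) :=
          ((continuousAt_const.mul hWcont).tendsto).mono_left nhdsWithin_le_nhds
        have hB : Tendsto (fun x : EuclideanSpace ℝ (Fin 2) =>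
            (‖x - p i‖ * Real.log ‖x - p i‖)^2) (𝓝[≠] (p i)) (𝓝 0) := hrl.comp hdlim
        have hAB := hA.mul hB
        rw [mul_zero] at hAB
        apply hAB.congr
        intro x
        ring
    apply hsumlim.congr
    intro x
    rw [← Finset.sum_mul, ← Finset.sum_mul, ← Finset.mul_sum]
end
end

section
/- Let (U_i)_{i ∈ I} be a countable family of open subsets of ℝ^d and (A_i)_{i ∈ I} measurable real functions with A_i = 0 outside U_i and Σ_{i ∈ I} A_i(x)² = 1 for every x ∈ ℝ^d. Suppose there is M > 0 such that every point of ℝ^d belongs to at most M of the sets U_i. Let Ω ⊆ ℝ^d be measurable and f measurable with 0 < ∫_Ω f² < ∞. Then there exists an index i₀ ∈ I such that ∫_{Ω ∩ U_{i₀}} A_{i₀}² f² > 0 and ∫_{Ω ∩ U_{i₀}} f² ≤ M · ∫_{Ω ∩ U_{i₀}} A_{i₀}² f². -/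
open MeasureTheory
open scoped ENNReal

/-- If `{Aᵢ²}` is a partition of unity subordinate to a countable covering `{Uᵢ}` of
`ℝ^d` by open sets, each point lying in at most `M` of the `Uᵢ`, then any set `Ω`
carrying positive finite `L²`-mass of `f` is `M`-localized in at least one `Uᵢ`. -/
theorem stmt_4 {d : ℕ} {ι : Type*} [Countable ι]
    (U : ι → Set (EuclideanSpace ℝ (Fin d)))
    (A : ι → EuclideanSpace ℝ (Fin d) → ℝ)
    (hUopen : ∀ i, IsOpen (U i))
    (hAmeas : ∀ i, Measurable (A i))
    (hA0 : ∀ i, ∀ x ∉ U i, A i x = 0)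
    (hpart : ∀ x, ∑' i, A i x ^ 2 = 1)
    (M : ℕ) (hM : 0 < M)
    (hover : ∀ x, {i | x ∈ U i}.Finite ∧ {i | x ∈ U i}.ncard ≤ M)
    (Ω : Set (EuclideanSpace ℝ (Fin d))) (hΩ : MeasurableSet Ω)
    (f : EuclideanSpace ℝ (Fin d) → ℝ) (hf : Measurable f)
    (hfi : IntegrableOn (fun x => f x ^ 2) Ω)
    (hfpos : 0 < ∫ x in Ω, f x ^ 2) :
    ∃ i₀, (0 < ∫ x in Ω ∩ U i₀, A i₀ x ^ 2 * f x ^ 2) ∧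
      (∫ x in Ω ∩ U i₀, f x ^ 2) ≤ (M : ℝ) * ∫ x in Ω ∩ U i₀, A i₀ x ^ 2 * f x ^ 2 := by
  -- notation
  set F2 : EuclideanSpace ℝ (Fin d) → ℝ≥0∞ := fun x => ENNReal.ofReal (f x ^ 2) with hF2def
  set G : ι → EuclideanSpace ℝ (Fin d) → ℝ≥0∞ :=
    fun i x => ENNReal.ofReal (A i x ^ 2 * f x ^ 2) with hGdef
  have hGmeas : ∀ i, Measurable (G i) :=
    fun i => ((((hAmeas i).pow_const 2).mul (hf.pow_const 2))).ennreal_ofReal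
  have hF2meas : Measurable F2 := (hf.pow_const 2).ennreal_ofReal
  -- summability of the partition at each point
  have hsumA : ∀ x, Summable (fun i => A i x ^ 2) := by
    intro x
    by_contra h
    have := hpart x
    rw [tsum_eq_zero_of_not_summable h] at this
    norm_num at this
  have hA1 : ∀ i x, A i x ^ 2 ≤ 1 := by
    intro i x
    have := Summable.le_tsum (hsumA x) i (fun j _ => sq_nonneg _)
    rwa [hpart x] at this
  -- key quantities
  set F : ℝ≥0∞ := ∫⁻ x in Ω, F2 x with hFdef
  set C : ι → ℝ≥0∞ := fun i => ∫⁻ x in Ω ∩ U i, G i x with hCdef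
  set B : ι → ℝ≥0∞ := fun i => ∫⁻ x in Ω ∩ U i, F2 x with hBdef
  -- restriction tricks via indicators
  have hCind : ∀ i, C i = ∫⁻ x in Ω, G i x := by
    intro i
    have hind : (U i).indicator (G i) = G i := by
      funext x
      by_cases hx : x ∈ U i
      · simp [Set.indicator_of_mem hx]
      · simp [Set.indicator_of_notMem hx, hGdef, hA0 i x hx]
    calc C i = ∫⁻ x in U i, G i x ∂(volume.restrict Ω) := by
            rw [Measure.restrict_restrict (hUopen i).measurableSet, Set.inter_comm]
      _ = ∫⁻ x in Ω, (U i).indicator (G i) x := (lintegral_indicator (hUopen i).measurableSet _).symm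
      _ = ∫⁻ x in Ω, G i x := by rw [hind]
  have hBind : ∀ i, B i = ∫⁻ x in Ω, (U i).indicator F2 x := by
    intro i
    calc B i = ∫⁻ x in U i, F2 x ∂(volume.restrict Ω) := by
            rw [Measure.restrict_restrict (hUopen i).measurableSet, Set.inter_comm]
      _ = ∫⁻ x in Ω, (U i).indicator F2 x := (lintegral_indicator (hUopen i).measurableSet _).symm
  -- Fact A : ∑ C = F
  have hFA : ∑' i, C i = F := by
    have : ∀ x, ∑' i, G i x = F2 x := by
      intro x
      rw [← ENNReal.ofReal_tsum_of_nonneg (fun i => mul_nonneg (sq_nonneg _) (sq_nonneg _))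
        ((hsumA x).mul_right _)]
      congr 1
      rw [tsum_mul_right, hpart x, one_mul]
    calc ∑' i, C i = ∑' i, ∫⁻ x in Ω, G i x := by simp only [hCind]
      _ = ∫⁻ x in Ω, ∑' i, G i x := (lintegral_tsum (fun i => (hGmeas i).aemeasurable)).symm
      _ = F := by rw [hFdef]; exact lintegral_congr this
  -- Fact B : ∑ B ≤ M * F
  have hFB : ∑' i, B i ≤ (M : ℝ≥0∞) * F := by
    have hpoint : ∀ x, ∑' i, (U i).indicator F2 x ≤ (M : ℝ≥0∞) * F2 x := by
      intro x
      classical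
      have hfin := (hover x).1
      have hcard := (hover x).2
      have : ∑' i, (U i).indicator F2 x = ∑ i ∈ hfin.toFinset, (U i).indicator F2 x := by
        refine tsum_eq_sum ?_
        intro i hi
        simp only [Set.Finite.mem_toFinset, Set.mem_setOf_eq] at hi
        exact Set.indicator_of_notMem hi _
      rw [this]
      calc ∑ i ∈ hfin.toFinset, (U i).indicator F2 x
          ≤ ∑ _i ∈ hfin.toFinset, F2 x := by
            refine Finset.sum_le_sum fun i _ => ?_
            exact Set.indicator_le_self _ _ x
        _ = (hfin.toFinset.card : ℝ≥0∞) * F2 x := by rw [Finset.sum_const, nsmul_eq_mul]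
        _ ≤ (M : ℝ≥0∞) * F2 x := by
            gcongr
            have : {i | x ∈ U i}.ncard = hfin.toFinset.card :=
              Set.ncard_eq_toFinset_card _ hfin
            exact_mod_cast this ▸ hcard
    calc ∑' i, B i = ∑' i, ∫⁻ x in Ω, (U i).indicator F2 x := by simp only [hBind]
      _ = ∫⁻ x in Ω, ∑' i, (U i).indicator F2 x :=
          (lintegral_tsum (fun i => (hF2meas.indicator (hUopen i).measurableSet).aemeasurable)).symm
      _ ≤ ∫⁻ x in Ω, (M : ℝ≥0∞) * F2 x := lintegral_mono hpoint
      _ = (M : ℝ≥0∞) * F := lintegral_const_mul _ hF2meas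
  -- F is finite
  have hFne : F ≠ ⊤ := by
    have := hfi.2
    rw [hasFiniteIntegral_iff_norm] at this
    have heq : F = ∫⁻ x in Ω, ENNReal.ofReal ‖f x ^ 2‖ := by
      refine lintegral_congr fun x => ?_
      rw [Real.norm_of_nonneg (sq_nonneg _)]
    rw [heq]
    exact this.ne
  -- real integrals are toReal of lintegrals
  have hInt : ∫ x in Ω, f x ^ 2 = F.toReal := by
    rw [hFdef]
    exact integral_eq_lintegral_of_nonneg_ae (Filter.Eventually.of_forall fun x => sq_nonneg _)
      (hf.pow_const 2).aestronglyMeasurable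
  have hFne0 : F ≠ 0 := by
    intro h
    rw [hInt, h] at hfpos
    simp at hfpos
  have hb_eq : ∀ i, ∫ x in Ω ∩ U i, f x ^ 2 = (B i).toReal := by
    intro i
    exact integral_eq_lintegral_of_nonneg_ae (Filter.Eventually.of_forall fun x => sq_nonneg _)
      (hf.pow_const 2).aestronglyMeasurable
  have hc_eq : ∀ i, ∫ x in Ω ∩ U i, A i x ^ 2 * f x ^ 2 = (C i).toReal := by
    intro i
    exact integral_eq_lintegral_of_nonneg_ae
      (Filter.Eventually.of_forall fun x => mul_nonneg (sq_nonneg _) (sq_nonneg _))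
      (((hAmeas i).pow_const 2).mul (hf.pow_const 2)).aestronglyMeasurable
  -- finiteness of B, C
  have hBF : ∀ i, B i ≤ F := by
    intro i
    exact lintegral_mono' (Measure.restrict_mono Set.inter_subset_left le_rfl) le_rfl
  have hCB : ∀ i, C i ≤ B i := by
    intro i
    refine lintegral_mono fun x => ?_
    refine ENNReal.ofReal_le_ofReal ?_
    calc A i x ^ 2 * f x ^ 2 ≤ 1 * f x ^ 2 :=
          mul_le_mul_of_nonneg_right (hA1 i x) (sq_nonneg _)
      _ = f x ^ 2 := one_mul _
  have hBne : ∀ i, B i ≠ ⊤ := fun i => ((hBF i).trans_lt (lt_top_iff_ne_top.2 hFne)).ne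
  have hCne : ∀ i, C i ≠ ⊤ := fun i => ((hCB i).trans_lt (lt_top_iff_ne_top.2 (hBne i))).ne
  -- contradiction
  by_contra hcon
  push_neg at hcon
  -- strict inequality everywhere C i > 0
  have hstrict : ∀ i, C i ≠ 0 → (M : ℝ) * (C i).toReal < (B i).toReal := by
    intro i hi
    have hcpos : 0 < (C i).toReal := ENNReal.toReal_pos hi (hCne i)
    have := hcon i (hc_eq i ▸ hcpos)
    rw [hb_eq i, hc_eq i] at this
    exact this
  have hweak : ∀ i, (M : ℝ) * (C i).toReal ≤ (B i).toReal := by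
    intro i
    by_cases hi : C i = 0
    · simp [hi, ENNReal.toReal_nonneg]
    · exact (hstrict i hi).le
  -- there is some i with C i ≠ 0
  have hex : ∃ i, C i ≠ 0 := by
    by_contra h
    push_neg at h
    have : ∑' i, C i = 0 := by simp [h]
    rw [hFA] at this
    exact hFne0 this
  obtain ⟨i₀, hi₀⟩ := hex
  -- summabilities
  have hsumC : Summable fun i => (C i).toReal :=
    ENNReal.summable_toReal (hFA ▸ hFne)
  have hsumB : Summable fun i => (B i).toReal := by
    refine ENNReal.summable_toReal ?_
    intro h
    rw [h] at hFB
    exact (ENNReal.mul_ne_top (ENNReal.natCast_ne_top M) hFne) (top_le_iff.1 hFB)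
  have htsumC : ∑' i, (C i).toReal = F.toReal := by
    rw [← ENNReal.tsum_toReal_eq hCne, hFA]
  have htsumB : ∑' i, (B i).toReal ≤ (M : ℝ) * F.toReal := by
    have h1 : (∑' i, B i).toReal ≤ ((M : ℝ≥0∞) * F).toReal :=
      ENNReal.toReal_mono (ENNReal.mul_ne_top (ENNReal.natCast_ne_top M) hFne) hFB
    rw [ENNReal.tsum_toReal_eq hBne] at h1
    simpa using h1
  -- strict comparison of sums
  have hlt : ∑' i, (M : ℝ) * (C i).toReal < ∑' i, (B i).toReal :=
    Summable.tsum_lt_tsum hweak (hstrict i₀ hi₀) (hsumC.mul_left _) hsumB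
  rw [tsum_mul_left, htsumC] at hlt
  linarith
end

section
/- Let d ≥ 2 and let V be a potential of case A with exponents satisfying c < (3/2)a. Set m := c/(3a) and, for λ ≥ 1, μ := λ^{−m}. For z ∈ ℤ^d and δ ∈ (0, 1/2] let J_{z,δ,μ} := ∏_{j=1}^d ( μ(z_j − 1/2 − δ), μ(z_j + 1/2 + δ) ). Then for every δ ∈ (0, 1/2] and every K > 0 there exists a constant C > 0 such that for all λ ≥ 1: Σ_{z ∈ ℤ^d} μ^d · ( sup_{J_{z,δ,μ}} ( λ − V(x) + K λ^{2m} ) )₊^{d/2} − ∫_{ℝ^d} (λ − V(x))₊^{d/2} dx ≤ C λ^{d/2 + d/a + 2c/(3a) − 1}. -/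
/-!
Outside the ball of radius `R ≍ λ^{1/a}` the lower bound `V ≥ C₁|x|^a` makes every summand
vanish, so only `O((R/μ)^d)` cubes contribute. Inside the ball of radius `3√d R` the gradient
bound gives `|∇V| ≲ λ^{c/a}`, so `V` oscillates by `≲ λ^{c/a} μ = λ^{2m}` over each enlarged
cube. Hence on the half-open cube `Q_z ⊂ J_{z,δ,μ}` of the tiling by side-`μ` cubes the supremum
exceeds `λ - V` by `O(λ^{2m})` pointwise, and the mean value theorem for `t ↦ t^{d/2}` on
`[0, O(λ)]` turns this into an excess `O(λ^{d/2 - 1 + 2m})` of the integrand. Integrating over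
the disjoint `Q_z` and counting cubes gives the error `O(R^d λ^{d/2 - 1 + 2m})`.
-/

open MeasureTheory

/-- Case A potentials: `V ∈ C¹(ℝ^d)` with `C₁|x|^a ≤ V(x) ≤ C₂|x|^b` and
`|∇V(x)| ≤ C₃|x|^c` for positive exponents `a, b, c`. -/
def CaseA {d : ℕ} (V : EuclideanSpace ℝ (Fin d) → ℝ) (a b c : ℝ) : Prop :=
  ContDiff ℝ 1 V ∧ 0 < a ∧ 0 < b ∧ 0 < c ∧
  ∃ C₁ C₂ C₃ : ℝ, 0 < C₁ ∧ 0 < C₂ ∧ 0 < C₃ ∧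
    ∀ x, C₁ * ‖x‖ ^ a ≤ V x ∧ V x ≤ C₂ * ‖x‖ ^ b ∧ ‖gradient V x‖ ≤ C₃ * ‖x‖ ^ c

open Set Metric

theorem Real.rpow_add_le_rpow_add_mul {u E M p : ℝ} (hu : 0 ≤ u) (hE : 0 ≤ E) (hM : u + E ≤ M)
    (hp : 1 ≤ p) : (u + E) ^ p ≤ u ^ p + p * M ^ (p - 1) * E := by
  have hderiv : ∀ t ∈ interior (Icc 0 M), deriv (fun t : ℝ => t ^ p) t ≤ p * M ^ (p - 1) := by
    rw [interior_Icc]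
    intro t ⟨ht0, htM⟩
    rw [Real.deriv_rpow_const]
    gcongr
  have := (convex_Icc 0 M).image_sub_le_mul_sub_of_deriv_le
    (Real.continuous_rpow_const (by linarith)).continuousOn
    (fun t _ => (Real.hasDerivAt_rpow_const (Or.inr hp)).differentiableAt.differentiableWithinAt)
    hderiv u ⟨hu, by linarith⟩ (u + E) ⟨by linarith, hM⟩ (by linarith)
  rw [add_sub_cancel_left] at this
  linarith

theorem max_rpow_le_max_rpow_add_mul {s u E M p : ℝ} (hs : s ≤ u + E) (hE : 0 ≤ E)
    (hM : max u 0 + E ≤ M) (hp : 1 ≤ p) :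
    max s 0 ^ p ≤ max u 0 ^ p + p * M ^ (p - 1) * E :=
  calc max s 0 ^ p ≤ (max u 0 + E) ^ p :=
        Real.rpow_le_rpow (le_max_right _ _) (max_le (by linarith [le_max_left u 0])
          (by positivity)) (by linarith)
    _ ≤ max u 0 ^ p + p * M ^ (p - 1) * E :=
        Real.rpow_add_le_rpow_add_mul (le_max_right _ _) hE hM hp

theorem Real.mul_rpow_one_div {r t : ℝ} (hr : 0 ≤ r) (ht : 0 ≤ t) (a s : ℝ) :
    (r * t ^ (1 / a)) ^ s = r ^ s * t ^ (s / a) := by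
  rw [Real.mul_rpow hr (Real.rpow_nonneg ht _), ← Real.rpow_mul ht, one_div_mul_eq_div]

theorem Real.mul_rpow_one_div_mul_rpow_neg {a c m lam s : ℝ} (ha : a ≠ 0) (hm : 3 * a * m = c)
    (hlam : 0 < lam) (hs : 0 ≤ s) :
    (s * lam ^ (1 / a)) ^ c * lam ^ (-m) = s ^ c * lam ^ (2 * m) := by
  rw [Real.mul_rpow_one_div hs hlam.le, mul_assoc, ← Real.rpow_add hlam, ← hm]
  congr 3
  field_simp
  ring

theorem mul_rpow_one_div_pow_mul_eq {d : ℕ} {a p m r B E lam : ℝ} (hr : 0 ≤ r) (hB : 0 ≤ B)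
    (hlam : 0 < lam) :
    (r * lam ^ (1 / a)) ^ d * (p * (B * lam) ^ (p - 1) * (E * lam ^ (2 * m))) =
      r ^ d * (p * B ^ (p - 1) * E) * lam ^ (p + d / a + 2 * m - 1) := by
  rw [show p + d / a + 2 * m - 1 = d / a + (p - 1) + 2 * m by ring, Real.rpow_add hlam,
    Real.rpow_add hlam, ← Real.rpow_natCast, Real.mul_rpow_one_div hr hlam.le, Real.rpow_natCast,
    Real.mul_rpow hB hlam.le]
  ring

theorem sum_measureReal_mul_le_integral_add {α ι : Type*} [MeasurableSpace α] {μ : Measure α}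
    {f : α → ℝ} (hf : Integrable f μ) (hf0 : 0 ≤ᵐ[μ] f) {S : Finset ι} {Q : ι → Set α}
    (hQ : ∀ i ∈ S, MeasurableSet (Q i)) (hQfin : ∀ i ∈ S, μ (Q i) ≠ ⊤)
    (hdisj : (S : Set ι).PairwiseDisjoint Q) {b : ι → ℝ} {ε : ℝ}
    (hb : ∀ i ∈ S, ∀ x ∈ Q i, b i ≤ f x + ε) :
    ∑ i ∈ S, μ.real (Q i) * b i ≤ ∫ x, f x ∂μ + ε * ∑ i ∈ S, μ.real (Q i) := by
  have piece : ∀ i ∈ S, μ.real (Q i) * b i ≤ ∫ x in Q i, f x ∂μ + ε * μ.real (Q i) := by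
    intro i hi
    have hconst (c : ℝ) : IntegrableOn (fun _ => c) (Q i) μ := integrableOn_const (hQfin i hi)
    calc μ.real (Q i) * b i = ∫ _ in Q i, b i ∂μ := by rw [setIntegral_const, smul_eq_mul]
      _ ≤ ∫ x in Q i, (f x + ε) ∂μ :=
        setIntegral_mono_on (hconst _) (hf.integrableOn.add (hconst _)) (hQ i hi) (hb i hi)
      _ = ∫ x in Q i, f x ∂μ + ε * μ.real (Q i) := by
        rw [integral_add hf.integrableOn (hconst _), setIntegral_const, smul_eq_mul, mul_comm]
  calc ∑ i ∈ S, μ.real (Q i) * b i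
      ≤ ∑ i ∈ S, (∫ x in Q i, f x ∂μ + ε * μ.real (Q i)) := Finset.sum_le_sum piece
    _ = ∫ x in ⋃ i ∈ S, Q i, f x ∂μ + ε * ∑ i ∈ S, μ.real (Q i) := by
      rw [Finset.sum_add_distrib, ← Finset.mul_sum,
        integral_biUnion_finset S hQ hdisj fun i _ => hf.integrableOn]
    _ ≤ ∫ x, f x ∂μ + ε * ∑ i ∈ S, μ.real (Q i) := by
      grw [setIntegral_le_integral hf hf0]

theorem integrable_max_rpow_of_nonpos_of_le_norm {E : Type*} [NormedAddCommGroup E]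
    [MeasurableSpace E] [BorelSpace E] [ProperSpace E] {ν : Measure E}
    [IsFiniteMeasureOnCompacts ν] {g : E → ℝ} (hg : Continuous g) {p R : ℝ} (hp : 0 < p)
    (hout : ∀ x, R ≤ ‖x‖ → g x ≤ 0) : Integrable (fun x => max (g x) 0 ^ p) ν := by
  refine Continuous.integrable_of_hasCompactSupport
    ((hg.max continuous_const).rpow_const fun _ => Or.inr hp.le) ?_
  refine HasCompactSupport.intro (isCompact_closedBall 0 R) fun x hx => ?_
  rw [mem_closedBall_zero_iff, not_le] at hx
  simp [max_eq_right (hout x hx.le), Real.zero_rpow hp.ne']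

theorem abs_sub_le_mul_norm_of_norm_gradient_le {F : Type*} [NormedAddCommGroup F]
    [InnerProductSpace ℝ F] [CompleteSpace F] {V : F → ℝ} (hV : Differentiable ℝ V)
    {C c ρ : ℝ} (hC : 0 ≤ C) (hc : 0 ≤ c) (hgrad : ∀ x, ‖gradient V x‖ ≤ C * ‖x‖ ^ c)
    {x y : F} (hx : x ∈ closedBall 0 ρ) (hy : y ∈ closedBall 0 ρ) :
    |V x - V y| ≤ C * ρ ^ c * ‖x - y‖ := by
  refine (convex_closedBall 0 ρ).norm_image_sub_le_of_norm_fderiv_le (fun w _ => hV w)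
    (fun w hw => ?_) hy hx
  rw [← (InnerProductSpace.toDual ℝ F).symm.norm_map]
  exact (hgrad w).trans (by gcongr; exact mem_closedBall_zero_iff.1 hw)

theorem EuclideanSpace.norm_le_sqrt_card_mul {d : ℕ} {x : EuclideanSpace ℝ (Fin d)} {r : ℝ}
    (hr : 0 ≤ r) (h : ∀ j, |x j| ≤ r) : ‖x‖ ≤ √d * r := by
  have hsum : ∑ j, ‖x j‖ ^ 2 ≤ ∑ _j : Fin d, r ^ 2 :=
    Finset.sum_le_sum fun j _ => by simpa [sq_abs] using pow_le_pow_left₀ (abs_nonneg _) (h j) 2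
  calc ‖x‖ = √(∑ j, ‖x j‖ ^ 2) := EuclideanSpace.norm_eq x
    _ ≤ √(d * r ^ 2) := Real.sqrt_le_sqrt (by simpa using hsum)
    _ = √d * r := by rw [Real.sqrt_mul (Nat.cast_nonneg d), Real.sqrt_sq hr]

theorem card_piFinset_Icc_neg (d N : ℕ) :
    (Fintype.piFinset fun _ : Fin d => Finset.Icc (-(N : ℤ)) N).card = (2 * N + 1) ^ d := by
  simp only [Fintype.card_piFinset, Int.card_Icc, Finset.prod_const, Finset.card_univ,
    Fintype.card_fin]
  congr 1
  omega

section Cubes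

variable {d : ℕ} {μ δ : ℝ}

def latticeCube (μ : ℝ) (z : Fin d → ℤ) : Set (EuclideanSpace ℝ (Fin d)) :=
  {x | ∀ j, μ * ((z j : ℝ) - 1 / 2) ≤ x j ∧ x j < μ * ((z j : ℝ) + 1 / 2)}

/-- The cube `J_{z,δ,μ}` of the statement. -/
def enlargedCube (μ δ : ℝ) (z : Fin d → ℤ) : Set (EuclideanSpace ℝ (Fin d)) :=
  {x | ∀ j, μ * ((z j : ℝ) - 1 / 2 - δ) < x j ∧ x j < μ * ((z j : ℝ) + 1 / 2 + δ)}

/-- The upper sum `M_λ` of the statement, with `f` in place of `λ - V + Kλ^{2m}`. -/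
noncomputable def upperSum (f : EuclideanSpace ℝ (Fin d) → ℝ) (μ δ p : ℝ) : ℝ :=
  ∑' z : Fin d → ℤ, μ ^ d * max (sSup (f '' enlargedCube μ δ z)) 0 ^ p

theorem latticeCube_eq_preimage (μ : ℝ) (z : Fin d → ℤ) :
    latticeCube μ z = (MeasurableEquiv.toLp 2 (Fin d → ℝ)).symm ⁻¹'
      univ.pi fun j => Ico (μ * ((z j : ℝ) - 1 / 2)) (μ * ((z j : ℝ) + 1 / 2)) := by
  ext x
  simp only [latticeCube, mem_preimage, mem_univ_pi, mem_Ico]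
  rfl

theorem measurableSet_latticeCube (μ : ℝ) (z : Fin d → ℤ) : MeasurableSet (latticeCube μ z) := by
  rw [latticeCube_eq_preimage]
  exact (MeasurableEquiv.toLp 2 (Fin d → ℝ)).symm.measurable
    (MeasurableSet.univ_pi fun _ => measurableSet_Ico)

theorem volume_latticeCube (hμ : 0 ≤ μ) (z : Fin d → ℤ) :
    volume (latticeCube μ z) = ENNReal.ofReal (μ ^ d) := by
  rw [latticeCube_eq_preimage,
    (EuclideanSpace.volume_preserving_symm_measurableEquiv_toLp (Fin d)).measure_preimage
      (MeasurableSet.univ_pi fun _ => measurableSet_Ico).nullMeasurableSet,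
    volume_pi_pi]
  simp only [Real.volume_Ico, ← mul_sub, add_sub_sub_cancel, add_halves, mul_one,
    Finset.prod_const, Finset.card_univ, Fintype.card_fin, ENNReal.ofReal_pow hμ]

theorem pairwise_disjoint_latticeCube (hμ : 0 < μ) :
    Pairwise (Function.onFun Disjoint (latticeCube (d := d) μ)) := by
  intro z w hzw
  refine Set.disjoint_left.2 fun x hxz hxw => hzw (funext fun j => ?_)
  have hle (k l : Fin d → ℤ) (hk : x ∈ latticeCube μ k) (hl : x ∈ latticeCube μ l) :
      l j ≤ k j := not_lt.1 fun h => by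
    have : (k j : ℝ) + 1 ≤ l j := by exact_mod_cast h
    nlinarith [(hk j).2, (hl j).1]
  exact le_antisymm (hle w z hxw hxz) (hle z w hxz hxw)

theorem latticeCube_nonempty (hμ : 0 < μ) (z : Fin d → ℤ) :
    (latticeCube μ z).Nonempty :=
  ⟨WithLp.toLp 2 fun j => μ * z j, fun j => ⟨by simp; linarith, by simp; linarith⟩⟩

theorem latticeCube_subset_enlargedCube (hμ : 0 < μ) (hδ : 0 < δ) (z : Fin d → ℤ) :
    latticeCube μ z ⊆ enlargedCube μ δ z := fun x hx j =>
  ⟨by nlinarith [(hx j).1], by nlinarith [(hx j).2]⟩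

theorem norm_sub_le_of_mem_enlargedCube (hμ : 0 ≤ μ) (hδ : δ ≤ 1 / 2) {z : Fin d → ℤ}
    {x y : EuclideanSpace ℝ (Fin d)} (hx : x ∈ enlargedCube μ δ z) (hy : y ∈ enlargedCube μ δ z) :
    ‖x - y‖ ≤ √d * (2 * μ) :=
  EuclideanSpace.norm_le_sqrt_card_mul (by positivity) fun j => by
    rw [PiLp.sub_apply, abs_le]
    constructor <;> nlinarith [hx j, hy j]

theorem norm_le_of_mem_enlargedCube (hμ : 0 ≤ μ) (hδ : δ ≤ 1 / 2) {N : ℕ}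
    {z : Fin d → ℤ} (hz : ∀ j, |z j| ≤ N) {y : EuclideanSpace ℝ (Fin d)}
    (hy : y ∈ enlargedCube μ δ z) : ‖y‖ ≤ √d * (μ * (N + 1)) :=
  EuclideanSpace.norm_le_sqrt_card_mul (by positivity) fun j => by
    have hzj : |(z j : ℝ)| ≤ N := by exact_mod_cast hz j
    rw [abs_le] at hzj ⊢
    constructor <;> nlinarith [hy j]

theorem le_norm_of_mem_enlargedCube (hμ : 0 ≤ μ) (hδ : δ ≤ 1 / 2) {N : ℕ}
    {z : Fin d → ℤ} {j : Fin d} (hz : (N : ℤ) < |z j|) {y : EuclideanSpace ℝ (Fin d)}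
    (hy : y ∈ enlargedCube μ δ z) : μ * N ≤ ‖y‖ := by
  refine le_trans ?_ ((PiLp.norm_apply_le y j).trans' (Real.norm_eq_abs (y j)).ge)
  rcases lt_abs.1 hz with hz | hz
  · have : (N : ℝ) + 1 ≤ z j := by exact_mod_cast hz
    nlinarith [(hy j).1, le_abs_self (y j)]
  · have : (N : ℝ) + 1 ≤ -z j := by exact_mod_cast hz
    nlinarith [(hy j).2, neg_le_abs (y j)]

variable {g : EuclideanSpace ℝ (Fin d) → ℝ} {κ : ℝ} {N : ℕ}

theorem sSup_image_enlargedCube_nonpos (hμ : 0 < μ) (hδ0 : 0 < δ) (hδ1 : δ ≤ 1 / 2) {R : ℝ}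
    (hR : R ≤ μ * N) (hout : ∀ x, R ≤ ‖x‖ → g x + κ ≤ 0) {z : Fin d → ℤ} {j : Fin d}
    (hz : (N : ℤ) < |z j|) : sSup ((fun x => g x + κ) '' enlargedCube μ δ z) ≤ 0 := by
  refine csSup_le (((latticeCube_nonempty hμ z).mono
    (latticeCube_subset_enlargedCube hμ hδ0 z)).image _) ?_
  rintro _ ⟨y, hy, rfl⟩
  exact hout y (hR.trans (le_norm_of_mem_enlargedCube hμ.le hδ1 hz hy))

theorem sSup_image_enlargedCube_le (hμ : 0 < μ) (hδ0 : 0 < δ) (hδ1 : δ ≤ 1 / 2) {L : ℝ}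
    (hL : 0 ≤ L) (hlip : ∀ x ∈ closedBall 0 (√d * (μ * (N + 1))),
      ∀ y ∈ closedBall 0 (√d * (μ * (N + 1))), g y - g x ≤ L * ‖x - y‖)
    {z : Fin d → ℤ} (hz : ∀ j, |z j| ≤ N) {x : EuclideanSpace ℝ (Fin d)}
    (hx : x ∈ latticeCube μ z) :
    sSup ((fun x => g x + κ) '' enlargedCube μ δ z) ≤ g x + (κ + L * (√d * (2 * μ))) := by
  have hxJ := latticeCube_subset_enlargedCube hμ hδ0 z hx
  refine csSup_le ((Set.nonempty_of_mem hxJ).image _) ?_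
  rintro _ ⟨y, hy, rfl⟩
  have hball {w} (hw : w ∈ enlargedCube μ δ z) : w ∈ closedBall 0 (√d * (μ * (N + 1))) :=
    mem_closedBall_zero_iff.2 (norm_le_of_mem_enlargedCube hμ.le hδ1 hz hw)
  have := hlip x (hball hxJ) y (hball hy)
  have := mul_le_mul_of_nonneg_left (norm_sub_le_of_mem_enlargedCube hμ.le hδ1 hxJ hy) hL
  dsimp only
  linarith

theorem upperSum_sub_integral_le (hg : Continuous g) {p R L M : ℝ} (hp : 1 ≤ p)
    (hμ : 0 < μ) (hδ0 : 0 < δ) (hδ1 : δ ≤ 1 / 2) (hμR : μ ≤ R) (hκ : 0 ≤ κ) (hL : 0 ≤ L)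
    (hout : ∀ x, R ≤ ‖x‖ → g x + κ ≤ 0)
    (hlip : ∀ x ∈ closedBall 0 (√d * (3 * R)), ∀ y ∈ closedBall 0 (√d * (3 * R)),
      g y - g x ≤ L * ‖x - y‖)
    (hM : ∀ x, max (g x) 0 + (κ + L * (√d * (2 * μ))) ≤ M) :
    upperSum (fun x => g x + κ) μ δ p - ∫ x, max (g x) 0 ^ p
      ≤ (5 * R) ^ d * (p * M ^ (p - 1) * (κ + L * (√d * (2 * μ)))) := by
  set ε := κ + L * (√d * (2 * μ))
  have hε : 0 ≤ ε := by positivity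
  obtain ⟨N, hRN, hNR⟩ : ∃ N : ℕ, R ≤ μ * N ∧ μ * N < 2 * R := by
    refine ⟨⌈R / μ⌉₊, (div_le_iff₀' hμ).1 (Nat.le_ceil _), ?_⟩
    have := mul_lt_mul_of_pos_left
      (Nat.ceil_lt_add_one (div_nonneg (hμ.le.trans hμR) hμ.le)) hμ
    rw [mul_add, mul_div_cancel₀ _ hμ.ne'] at this
    linarith
  set S := Fintype.piFinset fun _ : Fin d => Finset.Icc (-(N : ℤ)) N
  have hS (z : Fin d → ℤ) : z ∈ S ↔ ∀ j, |z j| ≤ N := by simp [S, abs_le]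
  have hcard : (S.card : ℝ) * μ ^ d ≤ (5 * R) ^ d := by
    rw [card_piFinset_Icc_neg, Nat.cast_pow, ← mul_pow]
    exact pow_le_pow_left₀ (by positivity) (by push_cast; linarith) d
  have hball : closedBall (0 : EuclideanSpace ℝ (Fin d)) (√d * (μ * (N + 1))) ⊆
      closedBall 0 (√d * (3 * R)) :=
    closedBall_subset_closedBall (mul_le_mul_of_nonneg_left (by linarith) (Real.sqrt_nonneg _))
  have hvol (z : Fin d → ℤ) : volume.real (latticeCube μ z) = μ ^ d := by
    rw [measureReal_def, volume_latticeCube hμ.le, ENNReal.toReal_ofReal (by positivity)]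
  have hf := integrable_max_rpow_of_nonpos_of_le_norm (ν := volume) hg (p := p) (by linarith)
    fun x hx => (le_add_of_nonneg_right hκ).trans (hout x hx)
  have hsum := sum_measureReal_mul_le_integral_add hf (ae_of_all _ fun x => by positivity)
    (fun z _ => measurableSet_latticeCube μ z)
    (fun z _ => by rw [volume_latticeCube hμ.le]; exact ENNReal.ofReal_ne_top)
    (fun z _ w _ hzw => pairwise_disjoint_latticeCube hμ hzw)
    (b := fun z => max (sSup ((fun x => g x + κ) '' enlargedCube μ δ z)) 0 ^ p)
    (ε := p * M ^ (p - 1) * ε) fun z hz x hx =>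
      max_rpow_le_max_rpow_add_mul (sSup_image_enlargedCube_le hμ hδ0 hδ1 hL
        (fun x hx y hy => hlip x (hball hx) y (hball hy)) ((hS z).1 hz) hx) hε (hM x) hp
  rw [upperSum, tsum_eq_sum (s := S) fun z hz => ?_]
  · simp only [hvol, Finset.sum_const, nsmul_eq_mul] at hsum
    have hM0 : 0 ≤ M := (add_nonneg (le_max_right _ _) hε).trans (hM 0)
    have := mul_le_mul_of_nonneg_left hcard (by positivity : 0 ≤ p * M ^ (p - 1) * ε)
    linarith
  · obtain ⟨j, hj⟩ := not_forall.1 (mt (hS z).2 hz)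
    rw [max_eq_right (sSup_image_enlargedCube_nonpos hμ hδ0 hδ1 hRN hout (not_le.1 hj)),
      Real.zero_rpow (by linarith), mul_zero]

end Cubes

section Potential

variable {a C₁ K lam r₀ : ℝ}

theorem sub_add_nonpos_of_le_norm {E : Type*} [SeminormedAddCommGroup E] {V : E → ℝ}
    (ha : 0 < a) (hC₁ : 0 < C₁) (hV : ∀ x, C₁ * ‖x‖ ^ a ≤ V x) (hr₀ : 0 ≤ r₀)
    (hr₀a : (1 + K) / C₁ ≤ r₀ ^ a) (hlam : 0 ≤ lam) {κ : ℝ} (hκ : κ ≤ K * lam) {x : E}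
    (hx : r₀ * lam ^ (1 / a) ≤ ‖x‖) : lam - V x + κ ≤ 0 := by
  have : (1 + K) * lam ≤ C₁ * ‖x‖ ^ a :=
    calc (1 + K) * lam ≤ C₁ * (r₀ ^ a * lam) := by
          rw [div_le_iff₀' hC₁] at hr₀a; nlinarith
      _ = C₁ * (r₀ * lam ^ (1 / a)) ^ a := by
          rw [Real.mul_rpow_one_div hr₀ hlam, div_self ha.ne', Real.rpow_one]
      _ ≤ C₁ * ‖x‖ ^ a := by gcongr
  linarith [hV x]

theorem upperSum_sub_integral_le_of_scale {d : ℕ} {V : EuclideanSpace ℝ (Fin d) → ℝ}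
    (hV : Differentiable ℝ V) {c C₃ : ℝ} (ha : 0 < a) (hc : 0 ≤ c) (hC₁ : 0 < C₁) (hC₃ : 0 ≤ C₃)
    (hVlow : ∀ x, C₁ * ‖x‖ ^ a ≤ V x) (hgrad : ∀ x, ‖gradient V x‖ ≤ C₃ * ‖x‖ ^ c)
    {m p δ A : ℝ} (hm : 3 * a * m = c) (hm1 : 2 * m ≤ 1) (hp : 1 ≤ p) (hδ0 : 0 < δ)
    (hδ1 : δ ≤ 1 / 2) (hK : 0 ≤ K) (hr₀ : 1 ≤ r₀) (hr₀a : (1 + K) / C₁ ≤ r₀ ^ a)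
    (hA : C₃ * (√d * (3 * r₀)) ^ c * (√d * 2) ≤ A) (hlam : 1 ≤ lam) :
    upperSum (fun x => lam - V x + K * lam ^ (2 * m)) (lam ^ (-m)) δ p
        - ∫ x, max (lam - V x) 0 ^ p
      ≤ (5 * (r₀ * lam ^ (1 / a))) ^ d *
          (p * ((1 + K + A) * lam) ^ (p - 1) * ((K + A) * lam ^ (2 * m))) := by
  have hlam0 : 0 < lam := by linarith
  have hA0 : 0 ≤ A := hA.trans' (by positivity)
  set R := r₀ * lam ^ (1 / a) with hR
  set L := C₃ * (√d * (3 * R)) ^ c with hL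
  have hμR : lam ^ (-m) ≤ R := (Real.rpow_le_one_of_one_le_of_nonpos hlam (by nlinarith)).trans
    (one_le_mul_of_one_le_of_one_le hr₀ (Real.one_le_rpow hlam (by positivity)))
  have h2m : lam ^ (2 * m) ≤ lam := Real.rpow_le_self_of_one_le hlam hm1
  have hLμ : L * (√d * (2 * lam ^ (-m))) ≤ A * lam ^ (2 * m) :=
    calc L * (√d * (2 * lam ^ (-m)))
        = C₃ * (√d * 2) * ((√d * (3 * r₀) * lam ^ (1 / a)) ^ c * lam ^ (-m)) := by
          rw [hL, hR, show √d * (3 * (r₀ * lam ^ (1 / a))) = √d * (3 * r₀) * lam ^ (1 / a) by ring]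
          ring
      _ ≤ A * lam ^ (2 * m) := by
          rw [Real.mul_rpow_one_div_mul_rpow_neg ha.ne' hm hlam0 (by positivity), ← mul_assoc]
          gcongr
          linarith
  have hM (x) : max (lam - V x) 0 + (K * lam ^ (2 * m) + L * (√d * (2 * lam ^ (-m))))
      ≤ (1 + K + A) * lam := by
    have hV0 : 0 ≤ V x := (hVlow x).trans' (by positivity)
    nlinarith [max_le (by linarith : lam - V x ≤ lam) hlam0.le,
      mul_le_mul_of_nonneg_left h2m hK, mul_le_mul_of_nonneg_left h2m hA0]
  calc _ ≤ (5 * R) ^ d * (p * ((1 + K + A) * lam) ^ (p - 1) *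
        (K * lam ^ (2 * m) + L * (√d * (2 * lam ^ (-m))))) :=
      upperSum_sub_integral_le (g := fun x => lam - V x) (continuous_const.sub hV.continuous)
        hp (by positivity) hδ0 hδ1 hμR (by positivity) (by positivity)
        (fun x hx => sub_add_nonpos_of_le_norm ha hC₁ hVlow (by positivity) hr₀a hlam0.le
          (mul_le_mul_of_nonneg_left h2m hK) hx)
        (fun x hx y hy => (sub_sub_sub_cancel_left _ _ lam).trans_le <| (le_abs_self _).trans
          (abs_sub_le_mul_norm_of_norm_gradient_le hV hC₃ hc hgrad hx hy)) hM
    _ ≤ _ := by gcongr; linarith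

end Potential

/-- Riemann-sum estimate for case A potentials with `c < (3/2)a`: with `m = c/(3a)`,
`μ = λ^{-m}` and overlapping cubes `J_{z,δ,μ}` of side `μ(1+2δ)`, the upper sum
`M_λ = ∑_z μ^d (sup_{J_{z,δ,μ}} (λ - V + Kλ^{2m}))₊^{d/2}` exceeds the Weyl integral
`W_λ = ∫ (λ - V)₊^{d/2}` by at most `C λ^{d/2 + d/a + 2c/(3a) - 1}`. -/
theorem stmt_10 {d : ℕ} (hd : 2 ≤ d)
    (V : EuclideanSpace ℝ (Fin d) → ℝ) (a b c : ℝ)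
    (hV : CaseA V a b c) (hc : c < 3 / 2 * a)
    (δ : ℝ) (hδ0 : 0 < δ) (hδ1 : δ ≤ 1 / 2) (K : ℝ) (hK : 0 < K) :
    ∃ C : ℝ, 0 < C ∧
      ∀ lam : ℝ, 1 ≤ lam →
        (∑' z : Fin d → ℤ,
            (lam ^ (-(c / (3 * a)))) ^ d *
              max (sSup ((fun x => lam - V x + K * lam ^ (2 * (c / (3 * a)))) ''
                {x : EuclideanSpace ℝ (Fin d) | ∀ j : Fin d,
                  lam ^ (-(c / (3 * a))) * ((z j : ℝ) - 1 / 2 - δ) < x j ∧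
                  x j < lam ^ (-(c / (3 * a))) * ((z j : ℝ) + 1 / 2 + δ)})) 0
                ^ ((d : ℝ) / 2))
          - (∫ x, max (lam - V x) 0 ^ ((d : ℝ) / 2))
        ≤ C * lam ^ ((d : ℝ) / 2 + (d : ℝ) / a + 2 * c / (3 * a) - 1) := by
  obtain ⟨hV1, ha, -, hc0, C₁, _, C₃, hC₁, -, hC₃, hVbd⟩ := hV
  -- `r₀ ≥ 1` keeps the mesh `λ^{-m} ≤ 1` below the radius `r₀ λ^{1/a}` beyond which `V` is large.
  set r₀ := max 1 (((1 + K) / C₁) ^ (1 / a))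
  set A := C₃ * (√d * (3 * r₀)) ^ c * (√d * 2)
  have hr₀a : (1 + K) / C₁ ≤ r₀ ^ a :=
    calc (1 + K) / C₁ = (((1 + K) / C₁) ^ (1 / a)) ^ a := by
          rw [← Real.rpow_mul (by positivity), one_div_mul_cancel ha.ne', Real.rpow_one]
      _ ≤ r₀ ^ a := by gcongr; exact le_max_right _ _
  have hp : 1 ≤ (d : ℝ) / 2 := by rw [le_div_iff₀ two_pos]; exact_mod_cast hd
  have hm1 : 2 * (c / (3 * a)) ≤ 1 := by
    rw [mul_div_assoc', div_le_one (by positivity)]; linarith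
  refine ⟨(5 * r₀) ^ d * ((d : ℝ) / 2 * (1 + K + A) ^ ((d : ℝ) / 2 - 1) * (K + A)),
    by positivity, fun lam hlam => ?_⟩
  have hlam0 : 0 < lam := by linarith
  rw [show 2 * c / (3 * a) = 2 * (c / (3 * a)) by ring,
    ← mul_rpow_one_div_pow_mul_eq (by positivity) (by positivity) hlam0, mul_assoc 5]
  exact upperSum_sub_integral_le_of_scale (hV1.differentiable one_ne_zero) ha hc0.le hC₁ hC₃.le
    (fun x => (hVbd x).1) (fun x => (hVbd x).2.2) (by field_simp) hm1 hp hδ0 hδ1 hK.le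
    (le_max_left _ _) hr₀a le_rfl hlam
end

section
/- For every q < 1 and every r > 0 there exist a sequence of pairs of positive real numbers (r_i, d_i), i ≥ 1, and positive constants M, M′ such that: (1) r₁ = r; (2) r_{i+1} = r_i + d_i for all i; (3) r_i / d_i is a positive integer for all i; (4) M r_i^q ≤ d_i ≤ M′ r_i^q for all i; (5) r_i → ∞ as i → ∞. -/
/-!
Take `dᵢ = rᵢ / ⌈rᵢ^(1-q)⌉₊`: then `rᵢ / dᵢ` is a positive integer by construction, and since
`rᵢ^(1-q) ≤ ⌈rᵢ^(1-q)⌉₊ ≤ rᵢ^(1-q) + 1` with `rᵢ^(1-q) ≥ r^(1-q)` (as `q < 1` and `rᵢ ≥ r`),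
`dᵢ` lies between `r^(1-q) / (r^(1-q) + 1) · rᵢ^q` and `rᵢ^q`. The radii increase by at least a
positive multiple of `rᵢ^q`, which rules out a finite limit.
-/

open Filter Topology

/-- A finite limit `L > 0` would satisfy `L + c L^q ≤ L`. -/
theorem tendsto_atTop_of_add_mul_rpow_le {u : ℕ → ℝ} {c q : ℝ} (hc : 0 < c) (hu₀ : 0 < u 0)
    (hu : ∀ i, u i + c * u i ^ q ≤ u (i + 1)) : Tendsto u atTop atTop := by
  have hpos : ∀ i, 0 < u i := by
    intro i
    induction i with
    | zero => exact hu₀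
    | succ i ih => nlinarith [hu i, Real.rpow_pos_of_pos ih q]
  have hmono : Monotone u := monotone_nat_of_le_succ fun i => by
    nlinarith [hu i, Real.rpow_pos_of_pos (hpos i) q]
  rcases tendsto_atTop_of_monotone hmono with h | ⟨L, hL⟩
  · exact h
  have hLpos : 0 < L := (hpos 0).trans_le (hmono.ge_of_tendsto hL 0)
  have hstep : Tendsto (fun i => u i + c * u i ^ q) atTop (𝓝 (L + c * L ^ q)) :=
    hL.add (((Real.continuousAt_rpow_const L q (Or.inl hLpos.ne')).tendsto.comp hL).const_mul c)
  have hle : L + c * L ^ q ≤ L :=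
    le_of_tendsto_of_tendsto' hstep (hL.comp (tendsto_add_atTop_nat 1)) hu
  nlinarith [Real.rpow_pos_of_pos hLpos q]

namespace AnnulusRadii

/-- The number `rᵢ / dᵢ` of cubes across an annulus of inner radius `x`. -/
noncomputable def cubeCount (q x : ℝ) : ℕ := ⌈x ^ (1 - q)⌉₊

noncomputable def width (q x : ℝ) : ℝ := x / cubeCount q x

noncomputable def radius (q r : ℝ) (i : ℕ) : ℝ := (fun x => x + width q x)^[i] r

variable {q r x : ℝ}

theorem cubeCount_pos (hx : 0 < x) : 0 < cubeCount q x :=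
  Nat.ceil_pos.2 (Real.rpow_pos_of_pos hx _)

theorem width_pos (hx : 0 < x) : 0 < width q x :=
  div_pos hx (Nat.cast_pos.2 (cubeCount_pos hx))

theorem cubeCount_mul_width (hx : 0 < x) : (cubeCount q x : ℝ) * width q x = x :=
  mul_div_cancel₀ x (Nat.cast_ne_zero.2 (cubeCount_pos hx).ne')

theorem rpow_mul_rpow_one_sub (hx : 0 < x) : x ^ q * x ^ (1 - q) = x := by
  rw [← Real.rpow_add hx, add_sub_cancel, Real.rpow_one]

theorem width_le_rpow (hx : 0 < x) : width q x ≤ x ^ q := by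
  have ht : 0 < x ^ (1 - q) := Real.rpow_pos_of_pos hx _
  calc width q x ≤ x / x ^ (1 - q) := div_le_div_of_nonneg_left hx.le ht (Nat.le_ceil _)
    _ = x ^ q := by rw [div_eq_iff ht.ne', rpow_mul_rpow_one_sub hx]

theorem div_add_one_mul_rpow_le_width (hq : q < 1) (hr : 0 < r) (hrx : r ≤ x) :
    r ^ (1 - q) / (r ^ (1 - q) + 1) * x ^ q ≤ width q x := by
  have hx : 0 < x := hr.trans_le hrx
  set s := r ^ (1 - q)
  set t := x ^ (1 - q)
  have hs : 0 < s := Real.rpow_pos_of_pos hr _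
  have hst : s ≤ t := Real.rpow_le_rpow hr.le hrx (by linarith)
  calc s / (s + 1) * x ^ q ≤ t / (t + 1) * x ^ q := by
        refine mul_le_mul_of_nonneg_right ?_ (by positivity)
        rw [div_le_div_iff₀ (by linarith) (by linarith)]
        linarith
    _ = x / (t + 1) := by rw [div_mul_eq_mul_div, mul_comm, rpow_mul_rpow_one_sub hx]
    _ ≤ width q x :=
        div_le_div_of_nonneg_left hx.le (Nat.cast_pos.2 (cubeCount_pos hx))
          (Nat.ceil_lt_add_one (by positivity)).le

theorem radius_succ (i : ℕ) : radius q r (i + 1) = radius q r i + width q (radius q r i) :=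
  Function.iterate_succ_apply' _ i r

theorem radius_pos (hr : 0 < r) (i : ℕ) : 0 < radius q r i := by
  induction i with
  | zero => exact hr
  | succ i ih => rw [radius_succ]; exact add_pos ih (width_pos ih)

theorem radius_mono (hr : 0 < r) : Monotone (radius q r) :=
  monotone_nat_of_le_succ fun i => by
    rw [radius_succ]; exact le_add_of_nonneg_right (width_pos (radius_pos hr i)).le

theorem le_radius (hr : 0 < r) (i : ℕ) : r ≤ radius q r i :=
  radius_mono hr (Nat.zero_le i)

end AnnulusRadii

open AnnulusRadii

/-- Construction of annuli radii: for any `q < 1` and `r > 0` there are sequences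
`(rᵢ, dᵢ)` of positive reals with `r₁ = r`, `rᵢ₊₁ = rᵢ + dᵢ`, `rᵢ/dᵢ ∈ ℕ`,
`M rᵢ^q ≤ dᵢ ≤ M' rᵢ^q` for positive constants `M, M'`, and `rᵢ → ∞`. -/
theorem stmt_12 (q r : ℝ) (hq : q < 1) (hr : 0 < r) :
    ∃ (rr dd : ℕ → ℝ) (M M' : ℝ), 0 < M ∧ 0 < M' ∧
      (∀ i, 0 < rr i ∧ 0 < dd i) ∧
      rr 0 = r ∧
      (∀ i, rr (i + 1) = rr i + dd i) ∧
      (∀ i, ∃ n : ℕ, 0 < n ∧ rr i = (n : ℝ) * dd i) ∧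
      (∀ i, M * rr i ^ q ≤ dd i ∧ dd i ≤ M' * rr i ^ q) ∧
      Filter.Tendsto rr Filter.atTop Filter.atTop := by
  set M := r ^ (1 - q) / (r ^ (1 - q) + 1)
  have hM : 0 < M := by positivity
  have hpos := radius_pos (q := q) hr
  have hlower : ∀ i, M * radius q r i ^ q ≤ width q (radius q r i) := fun i =>
    div_add_one_mul_rpow_le_width hq hr (le_radius hr i)
  refine ⟨radius q r, fun i => width q (radius q r i), M, 1, hM, one_pos,
    fun i => ⟨hpos i, width_pos (hpos i)⟩, rfl, radius_succ,
    fun i => ⟨cubeCount q (radius q r i), cubeCount_pos (hpos i),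
      (cubeCount_mul_width (hpos i)).symm⟩,
    fun i => ⟨hlower i, by rw [one_mul]; exact width_le_rpow (hpos i)⟩, ?_⟩
  exact tendsto_atTop_of_add_mul_rpow_le hM hr fun i => by rw [radius_succ]; linarith [hlower i]
end

section
/- Let q < 1 and let (r_i, d_i), i ≥ 1, be sequences of positive real numbers such that r_{i+1} = r_i + d_i for all i, r_i → ∞ as i → ∞, and there exist constants 0 < M ≤ M′ with M r_i^q ≤ d_i ≤ M′ r_i^q for all i. Then there exist positive constants M″ and M‴ such that M″ ≤ d_{i+1}/d_i ≤ M‴ for all i ≥ 1. -/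
/-- Bounded ratio of consecutive widths: if `rᵢ → ∞` by steps `dᵢ` comparable to
`rᵢ^q` with `q < 1`, then `dᵢ₊₁/dᵢ` is bounded above and away from zero. -/
theorem stmt_13 (q : ℝ) (hq : q < 1) (rr dd : ℕ → ℝ)
    (hpos : ∀ i, 0 < rr i ∧ 0 < dd i)
    (hrec : ∀ i, rr (i + 1) = rr i + dd i)
    (htend : Filter.Tendsto rr Filter.atTop Filter.atTop)
    (M M' : ℝ) (hM : 0 < M) (hMM' : M ≤ M')
    (hcomp : ∀ i, M * rr i ^ q ≤ dd i ∧ dd i ≤ M' * rr i ^ q) :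
    ∃ M'' M''' : ℝ, 0 < M'' ∧ 0 < M''' ∧
      ∀ i, M'' ≤ dd (i + 1) / dd i ∧ dd (i + 1) / dd i ≤ M''' := by
  have hM' : 0 < M' := hM.trans_le hMM'
  set C : ℝ := 1 + M' * rr 0 ^ (q - 1) with hCdef
  have hC1 : 1 < C := by
    have : 0 < M' * rr 0 ^ (q - 1) :=
      mul_pos hM' (Real.rpow_pos_of_pos (hpos 0).1 _)
    linarith
  have hmono : ∀ i, rr 0 ≤ rr i := by
    intro i
    induction i with
    | zero => exact le_rfl
    | succ n ih =>
      have := (hpos n).2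
      rw [hrec n]; linarith
  -- ratio of consecutive r's lies in [1, C]
  have hratio : ∀ i, 1 ≤ rr (i + 1) / rr i ∧ rr (i + 1) / rr i ≤ C := by
    intro i
    have hri := (hpos i).1
    have hdi := (hpos i).2
    constructor
    · rw [le_div_iff₀ hri, one_mul, hrec i]; linarith
    · rw [div_le_iff₀ hri, hrec i]
      have h1 : dd i ≤ M' * rr i ^ q := (hcomp i).2
      have h2 : rr i ^ q = rr i ^ (q - 1) * rr i := by
        rw [← Real.rpow_add_one hri.ne' (q - 1)]; ring_nf
      have h3 : rr i ^ (q - 1) ≤ rr 0 ^ (q - 1) :=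
        Real.rpow_le_rpow_of_nonpos (hpos 0).1 (hmono i) (by linarith)
      calc rr i + dd i ≤ rr i + M' * (rr 0 ^ (q - 1) * rr i) := by
            rw [h2] at h1
            nlinarith [mul_le_mul_of_nonneg_left h3 hM'.le, hri]
        _ = C * rr i := by ring
  -- bounds on x^q for 1 ≤ x ≤ C
  have haux : ∀ x : ℝ, 1 ≤ x → x ≤ C →
      min 1 (C ^ q) ≤ x ^ q ∧ x ^ q ≤ max 1 (C ^ q) := by
    intro x hx1 hxC
    rcases le_or_gt 0 q with hq0 | hq0
    · constructor
      · refine le_trans (min_le_left _ _) ?_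
        calc (1:ℝ) = 1 ^ q := (Real.one_rpow q).symm
          _ ≤ x ^ q := Real.rpow_le_rpow zero_le_one hx1 hq0
      · exact le_trans (Real.rpow_le_rpow (by linarith) hxC hq0) (le_max_right _ _)
    · constructor
      · exact le_trans (min_le_right _ _)
          (Real.rpow_le_rpow_of_nonpos (by linarith) hxC hq0.le)
      · refine le_trans ?_ (le_max_left _ _)
        calc x ^ q ≤ 1 ^ q := Real.rpow_le_rpow_of_nonpos one_pos hx1 hq0.le
          _ = 1 := Real.one_rpow q
  refine ⟨M / M' * min 1 (C ^ q), M' / M * max 1 (C ^ q), ?_, ?_, ?_⟩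
  · exact mul_pos (div_pos hM hM')
      (lt_min one_pos (Real.rpow_pos_of_pos (by linarith) q))
  · exact mul_pos (div_pos hM' hM) (lt_of_lt_of_le one_pos (le_max_left _ _))
  · intro i
    have hri := (hpos i).1
    have hri1 := (hpos (i + 1)).1
    have hdi := (hpos i).2
    have hdi1 := (hpos (i + 1)).2
    have hq1 := Real.rpow_pos_of_pos hri q
    have hq2 := Real.rpow_pos_of_pos hri1 q
    have hrpowdiv : (rr (i + 1) / rr i) ^ q = rr (i + 1) ^ q / rr i ^ q :=
      Real.div_rpow hri1.le hri.le q
    obtain ⟨hlo, hhi⟩ := haux _ (hratio i).1 (hratio i).2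
    rw [hrpowdiv] at hlo hhi
    constructor
    · -- lower: M/M' * min ≤ d(i+1)/d i
      have h1 : M * rr (i + 1) ^ q ≤ dd (i + 1) := (hcomp (i + 1)).1
      have h2 : dd i ≤ M' * rr i ^ q := (hcomp i).2
      rw [le_div_iff₀ hdi]
      calc M / M' * min 1 (C ^ q) * dd i
          ≤ M / M' * (rr (i+1) ^ q / rr i ^ q) * (M' * rr i ^ q) := by
            apply mul_le_mul
            · exact mul_le_mul_of_nonneg_left hlo (by positivity)
            · exact h2
            · exact hdi.le
            · positivity
        _ = M * rr (i + 1) ^ q := by field_simp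
        _ ≤ dd (i + 1) := h1
    · have h1 : dd (i + 1) ≤ M' * rr (i + 1) ^ q := (hcomp (i + 1)).2
      have h2 : M * rr i ^ q ≤ dd i := (hcomp i).1
      rw [div_le_iff₀ hdi]
      calc dd (i + 1) ≤ M' * rr (i + 1) ^ q := h1
        _ = M' / M * (rr (i+1) ^ q / rr i ^ q) * (M * rr i ^ q) := by field_simp
        _ ≤ M' / M * max 1 (C ^ q) * dd i := by
            apply mul_le_mul
            · exact mul_le_mul_of_nonneg_left hhi (by positivity)
            · exact h2
            · positivity
            · positivity
end
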